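/- arXiv:2302.07745 — 8 statements merged into one kernel-verified Lean document; each statement's English description precedes it below -/
import Mathlib

section
/- Let m ∈ ℕ, p ∈ (0,2], and φ = {φ_n}_{n=0}^∞ ∈ ℱ. Define Ψ₁(r) = p·((1−r^m)/(1+r^m))·φ₀(r) − 2Φ₁(r) and let R₁ be the minimal root of Ψ₁(r) = 0 in (0,1). Suppose Ψ₁(r) < 0 for all r in some interval (R₁, R₁+ε) with ε > 0. Then for every r ∈ (R₁, R₁+ε) there exist f ∈ ℬ (with Taylor coefficients a_n), ω ∈ ℬ_m, and z ∈ 𝔻 with |z| = r such that |f(ω(z))|^p·φ₀(r) + Σ_{n=1}^∞ |a_n|φ_n(r) + Σ_{n=1}^∞ |a_n|²·[φ_{2n}(r)/(1+|a₀|) + Φ_{2n+1}(r)] > φ₀(r); in fact one may take ω(z) = z^m and f(z) = (z+a)/(1+az) with a ∈ [0,1) sufficiently close to 1. -/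
/-!
The extremal data are `ω(z) = z ^ m`, `z = r` and the disk automorphism `f_α(z) = (z + α)/(1 + α z)`,
whose coefficients are `a₀ = α`, `a_{n+1} = (1 - α²)(-α)ⁿ`. Dropping the nonnegative quadratic sum,
it suffices that `(1 - F α) φ₀(r) < (1 - α²) ∑ αⁿ φ_{n+1}(r)` with `F α = ((rᵐ + α)/(1 + α rᵐ)) ^ p`.
After division by `1 - α`, as `α → 1⁻` the left side tends to `F'(1) φ₀(r) = p (1 - rᵐ)/(1 + rᵐ) φ₀(r)`
and, by Abel's theorem, the right side tends to `2 Φ₁(r)`. The limits satisfy the strict inequality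
because `Ψ₁(r) < 0`, hence so do the two sides for `α` close to `1`.
-/

open Filter Topology Set

noncomputable section

def mobiusDisk (α : ℝ) (w : ℂ) : ℂ := (w + α) / (1 + α * w)

def mobiusDiskCoeff (α : ℝ) : ℕ → ℂ
  | 0 => α
  | n + 1 => ((1 - α ^ 2 : ℝ) : ℂ) * (-α : ℂ) ^ n

end

section MobiusDisk

variable {α : ℝ}

lemma hasSum_mobiusDiskCoeff (hα : |α| < 1) {w : ℂ} (hw : ‖w‖ < 1) :
    HasSum (fun n => mobiusDiskCoeff α n * w ^ n) (mobiusDisk α w) := by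
  have hαw : ‖-(α : ℂ) * w‖ < 1 := by
    rw [norm_mul, norm_neg, Complex.norm_real, Real.norm_eq_abs]
    nlinarith [norm_nonneg w, abs_nonneg α]
  have hden : (1 : ℂ) + α * w ≠ 0 := by
    intro h
    rw [show -(α : ℂ) * w = 1 by linear_combination -h, norm_one] at hαw
    exact lt_irrefl _ hαw
  have htail : HasSum (fun n => mobiusDiskCoeff α (n + 1) * w ^ (n + 1))
      ((1 - α ^ 2) * w * (1 - -α * w)⁻¹) :=
    ((hasSum_geometric_of_norm_lt_one hαw).mul_left ((1 - α ^ 2) * w)).congr_fun fun n => by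
      simp only [mobiusDiskCoeff]; push_cast; ring
  convert (hasSum_nat_add_iff (f := fun n => mobiusDiskCoeff α n * w ^ n) 1).mp htail using 1
  · rfl
  rw [Finset.sum_range_one, mobiusDisk, mobiusDiskCoeff, neg_mul, sub_neg_eq_add, pow_zero,
    mul_one, ← div_eq_mul_inv, div_add' _ _ _ hden]
  ring

lemma norm_mobiusDisk_le_one (hα : |α| ≤ 1) {w : ℂ} (hw : ‖w‖ ≤ 1) :
    ‖mobiusDisk α w‖ ≤ 1 := by
  rw [mobiusDisk, norm_div]
  refine div_le_one_of_le₀ ?_ (norm_nonneg _)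
  -- `‖1 + α w‖² - ‖w + α‖² = (1 - α²)(1 - ‖w‖²)`
  have key : ‖w + α‖ ^ 2 ≤ ‖1 + α * w‖ ^ 2 := by
    have hw2 : w.re * w.re + w.im * w.im ≤ 1 := by
      rw [← Complex.normSq_apply, ← Complex.sq_norm]; nlinarith [norm_nonneg w]
    have hα2 : α ^ 2 ≤ 1 := by nlinarith [sq_abs α, abs_nonneg α]
    rw [Complex.sq_norm, Complex.sq_norm]
    simp only [Complex.normSq_apply, Complex.add_re, Complex.add_im, Complex.mul_re,
      Complex.mul_im, Complex.ofReal_re, Complex.ofReal_im, Complex.one_re, Complex.one_im]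
    nlinarith [mul_nonneg (sub_nonneg.mpr hα2) (sub_nonneg.mpr hw2)]
  exact (pow_le_pow_iff_left₀ (norm_nonneg _) (norm_nonneg _) two_ne_zero).mp key

lemma norm_mobiusDiskCoeff_succ (hα : |α| ≤ 1) (n : ℕ) :
    ‖mobiusDiskCoeff α (n + 1)‖ = (1 - α ^ 2) * |α| ^ n := by
  have : 0 ≤ 1 - α ^ 2 := by nlinarith [sq_abs α, abs_nonneg α]
  rw [mobiusDiskCoeff, norm_mul, norm_pow, norm_neg, Complex.norm_real, Complex.norm_real,
    Real.norm_eq_abs, Real.norm_eq_abs, abs_of_nonneg this]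

lemma mobiusDisk_ofReal (α x : ℝ) : mobiusDisk α x = ((x + α) / (1 + α * x) : ℝ) := by
  push_cast [mobiusDisk]; rfl

end MobiusDisk

lemma hasDerivAt_rpow_mobius_at_one {ρ : ℝ} (hρ : 1 + ρ ≠ 0) (p : ℝ) :
    HasDerivAt (fun a : ℝ => ((ρ + a) / (1 + a * ρ)) ^ p) (p * ((1 - ρ) / (1 + ρ))) 1 := by
  have hval : (ρ + 1) / (1 + 1 * ρ) = 1 := by rw [one_mul, add_comm, div_self hρ]
  have hg : HasDerivAt (fun a : ℝ => (ρ + a) / (1 + a * ρ)) ((1 - ρ) / (1 + ρ)) 1 := by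
    refine (((hasDerivAt_id' 1).const_add ρ).div
      (((hasDerivAt_id' 1).mul_const ρ).const_add 1) (by rwa [one_mul])).congr_deriv ?_
    rw [one_mul, one_mul]
    field_simp
    ring
  convert hg.rpow_const (p := p) (Or.inl (by rw [hval]; exact one_ne_zero)) using 1
  rw [hval, Real.one_rpow]
  ring

lemma exists_lt_rpow_mobius_mul_add {ρ c : ℝ} (p : ℝ) (hρ : 1 + ρ ≠ 0) {b : ℕ → ℝ}
    (hb : Summable b) (h : p * ((1 - ρ) / (1 + ρ)) * c < 2 * ∑' n, b n) :
    ∃ α ∈ Ioo (0 : ℝ) 1,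
      c < ((ρ + α) / (1 + α * ρ)) ^ p * c + (1 - α ^ 2) * ∑' n, b n * α ^ n := by
  set F := fun a : ℝ => ((ρ + a) / (1 + a * ρ)) ^ p
  set S := fun a : ℝ => ∑' n, b n * a ^ n
  have hF1 : F 1 = 1 := by simp only [F, one_mul, add_comm ρ, div_self hρ, Real.one_rpow]
  have hslope : Tendsto (slope F 1) (𝓝[<] 1) (𝓝 (p * ((1 - ρ) / (1 + ρ)))) :=
    (hasDerivAt_iff_tendsto_slope.mp (hasDerivAt_rpow_mobius_at_one hρ p)).mono_left
      (nhdsWithin_mono _ fun _ ha => ne_of_lt ha)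
  have habel : Tendsto S (𝓝[<] 1) (𝓝 (∑' n, b n)) :=
    Real.tendsto_tsum_powerSeries_nhdsWithin_lt hb.hasSum.tendsto_sum_nat
  have hgap : Tendsto (fun a => (1 + a) * S a - slope F 1 a * c) (𝓝[<] 1)
      (𝓝 ((1 + 1) * ∑' n, b n - p * ((1 - ρ) / (1 + ρ)) * c)) :=
    ((tendsto_const_nhds.add (tendsto_id.mono_left nhdsWithin_le_nhds)).mul habel).sub
      (hslope.mul_const c)
  obtain ⟨α, hα, hpos⟩ := ((eventually_mem_set.mpr (Ioo_mem_nhdsLT zero_lt_one)).and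
    (hgap.eventually (eventually_gt_nhds (sub_pos.mpr (by linarith))))).exists
  refine ⟨α, hα, ?_⟩
  have h1α : 0 < 1 - α := sub_pos.mpr hα.2
  have hsl : (1 - α) * slope F 1 α = 1 - F α := by
    rw [slope_def_field, hF1]
    field_simp [sub_ne_zero.mpr hα.2.ne]
    ring
  calc c = F α * c + (1 - α) * slope F 1 α * c := by rw [hsl]; ring
    _ < F α * c + (1 - α) * ((1 + α) * S α) := by linarith [mul_pos h1α hpos]
    _ = F α * c + (1 - α ^ 2) * S α := by ring

theorem stmt_1_general
    (m : ℕ) (p : ℝ)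
    -- φ ∈ ℱ
    (φ : ℕ → ℝ → ℝ)
    (hφnn : ∀ n, ∀ r ∈ Set.Ico (0:ℝ) 1, 0 ≤ φ n r)
    (hφsum : ∀ r ∈ Set.Ico (0:ℝ) 1, Summable fun n => φ n r)
    -- Ψ₁ and its minimal root R₁ in (0,1)
    (Ψ : ℝ → ℝ)
    (hΨ : ∀ r : ℝ, Ψ r = p * ((1 - r ^ m) / (1 + r ^ m)) * φ 0 r
            - 2 * ∑' n : ℕ, φ (n + 1) r)
    (R₁ : ℝ) (hR₁ : R₁ ∈ Set.Ioo (0:ℝ) 1)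
    -- Ψ₁ < 0 on the interval (R₁, R₁ + ε) ⊆ (R₁, 1)
    (ε : ℝ) (hRε : R₁ + ε ≤ 1)
    (hΨneg : ∀ r : ℝ, R₁ < r → r < R₁ + ε → Ψ r < 0) :
    ∀ r : ℝ, R₁ < r → r < R₁ + ε →
      ∃ (f : ℂ → ℂ) (a : ℕ → ℂ) (ω : ℂ → ℂ) (z : ℂ),
        (∀ w ∈ Metric.ball (0:ℂ) 1, HasSum (fun n => a n * w ^ n) (f w)) ∧
        (∀ w ∈ Metric.ball (0:ℂ) 1, ‖f w‖ ≤ 1) ∧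
        DifferentiableOn ℂ ω (Metric.ball (0:ℂ) 1) ∧
        (∀ w ∈ Metric.ball (0:ℂ) 1, ‖ω w‖ ≤ 1) ∧
        (∀ k < m, iteratedDeriv k ω 0 = 0) ∧
        iteratedDeriv m ω 0 ≠ 0 ∧
        z ∈ Metric.ball (0:ℂ) 1 ∧ ‖z‖ = r ∧
        φ 0 r < ‖f (ω z)‖ ^ p * φ 0 r
          + (∑' n : ℕ, ‖a (n + 1)‖ * φ (n + 1) r)
          + (∑' n : ℕ, ‖a (n + 1)‖ ^ 2 *
              (φ (2 * (n + 1)) r / (1 + ‖a 0‖)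
                + ∑' k : ℕ, φ (2 * (n + 1) + 1 + k) r)) := by
  intro r hR₁r hrε
  have hr0 : 0 ≤ r := hR₁.1.le.trans hR₁r.le
  have hr : r ∈ Set.Ico (0:ℝ) 1 := ⟨hr0, hrε.trans_le hRε⟩
  have hΨr : p * ((1 - r ^ m) / (1 + r ^ m)) * φ 0 r < 2 * ∑' n, φ (n + 1) r := by
    have := hΨneg r hR₁r hrε
    rw [hΨ] at this
    linarith
  obtain ⟨α, ⟨hα0, hα1⟩, hlt⟩ := exists_lt_rpow_mobius_mul_add p (by positivity)
    ((summable_nat_add_iff 1).mpr (hφsum r hr)) hΨr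
  have hα : |α| < 1 := by rwa [abs_of_pos hα0]
  refine ⟨mobiusDisk α, mobiusDiskCoeff α, (· ^ m), r,
    fun w hw => hasSum_mobiusDiskCoeff hα (mem_ball_zero_iff.mp hw),
    fun w hw => norm_mobiusDisk_le_one hα.le (mem_ball_zero_iff.mp hw).le,
    (differentiable_pow m).differentiableOn,
    fun w hw => norm_pow w m ▸ pow_le_one₀ (norm_nonneg w) (mem_ball_zero_iff.mp hw).le,
    fun k hk => by rw [iteratedDeriv_fun_pow_zero, if_neg hk.ne, Nat.cast_zero],
    by rw [iteratedDeriv_fun_pow_zero, if_pos rfl]; exact_mod_cast m.factorial_ne_zero,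
    by simpa [abs_of_nonneg hr0] using hr.2, by simp [abs_of_nonneg hr0], ?_⟩
  have hval : ‖mobiusDisk α ((r : ℂ) ^ m)‖ = (r ^ m + α) / (1 + α * r ^ m) := by
    rw [← Complex.ofReal_pow, mobiusDisk_ofReal, Complex.norm_real,
      Real.norm_of_nonneg (by positivity)]
  have hlin : ∑' n, ‖mobiusDiskCoeff α (n + 1)‖ * φ (n + 1) r
      = (1 - α ^ 2) * ∑' n, φ (n + 1) r * α ^ n := by
    rw [← tsum_mul_left]
    congr with n
    rw [norm_mobiusDiskCoeff_succ hα.le, abs_of_pos hα0]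
    ring
  refine lt_add_of_lt_of_nonneg ?_ (tsum_nonneg fun n => mul_nonneg (sq_nonneg _)
    (add_nonneg (div_nonneg (hφnn _ r hr) (by positivity)) (tsum_nonneg fun k => hφnn _ r hr)))
  rwa [hval, hlin]

/-- Theorem 1 of the paper, sharpness part.
If `Ψ₁(r) < 0` on some interval `(R₁, R₁+ε)` to the right of the minimal root `R₁`,
then for every `r` in that interval there are `f ∈ ℬ`, `ω ∈ ℬ_m` and `z` with `|z| = r`
for which the Bohr-type quantity exceeds `φ₀(r)`; so the radius `R₁` cannot be improved. -/
theorem stmt_1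
    (m : ℕ) (hm : 1 ≤ m) (p : ℝ) (hp0 : 0 < p) (hp2 : p ≤ 2)
    -- φ ∈ ℱ
    (φ : ℕ → ℝ → ℝ)
    (hφc : ∀ n, ContinuousOn (φ n) (Set.Ico (0:ℝ) 1))
    (hφnn : ∀ n, ∀ r ∈ Set.Ico (0:ℝ) 1, 0 ≤ φ n r)
    (hφsum : ∀ r ∈ Set.Ico (0:ℝ) 1, Summable fun n => φ n r)
    (hφloc : TendstoLocallyUniformlyOn
      (fun N r => ∑ n ∈ Finset.range N, φ n r)
      (fun r => ∑' n, φ n r) Filter.atTop (Set.Ico (0:ℝ) 1))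
    -- Ψ₁ and its minimal root R₁ in (0,1)
    (Ψ : ℝ → ℝ)
    (hΨ : ∀ r : ℝ, Ψ r = p * ((1 - r ^ m) / (1 + r ^ m)) * φ 0 r
            - 2 * ∑' n : ℕ, φ (n + 1) r)
    (R₁ : ℝ) (hR₁ : R₁ ∈ Set.Ioo (0:ℝ) 1) (hroot : Ψ R₁ = 0)
    (hmin : ∀ r ∈ Set.Ioo (0:ℝ) 1, Ψ r = 0 → R₁ ≤ r)
    -- Ψ₁ < 0 on the interval (R₁, R₁ + ε) ⊆ (R₁, 1)
    (ε : ℝ) (hε : 0 < ε) (hRε : R₁ + ε ≤ 1)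
    (hΨneg : ∀ r : ℝ, R₁ < r → r < R₁ + ε → Ψ r < 0) :
    ∀ r : ℝ, R₁ < r → r < R₁ + ε →
      ∃ (f : ℂ → ℂ) (a : ℕ → ℂ) (ω : ℂ → ℂ) (z : ℂ),
        (∀ w ∈ Metric.ball (0:ℂ) 1, HasSum (fun n => a n * w ^ n) (f w)) ∧
        (∀ w ∈ Metric.ball (0:ℂ) 1, ‖f w‖ ≤ 1) ∧
        DifferentiableOn ℂ ω (Metric.ball (0:ℂ) 1) ∧
        (∀ w ∈ Metric.ball (0:ℂ) 1, ‖ω w‖ ≤ 1) ∧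
        (∀ k < m, iteratedDeriv k ω 0 = 0) ∧
        iteratedDeriv m ω 0 ≠ 0 ∧
        z ∈ Metric.ball (0:ℂ) 1 ∧ ‖z‖ = r ∧
        φ 0 r < ‖f (ω z)‖ ^ p * φ 0 r
          + (∑' n : ℕ, ‖a (n + 1)‖ * φ (n + 1) r)
          + (∑' n : ℕ, ‖a (n + 1)‖ ^ 2 *
              (φ (2 * (n + 1)) r / (1 + ‖a 0‖)
                + ∑' k : ℕ, φ (2 * (n + 1) + 1 + k) r)) :=
  stmt_1_general m p φ hφnn hφsum Ψ hΨ R₁ hR₁ ε hRε hΨneg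
end

section
/- Let m ∈ ℕ, p ∈ (0,2], and φ = {φ_n}_{n=0}^∞ ∈ ℱ. Define Ψ₂(r) = (p/2)·φ₀(r) − Φ₁(r) − r^m/(1−r^m) and let R₂ be the minimal positive root of Ψ₂(r) = 0. Suppose Ψ₂(r) < 0 on some interval (R₂, R₂+ε), ε > 0. Then for every r ∈ (R₂, R₂+ε) there exist f ∈ ℬ (with coefficients a_n), ω ∈ ℬ_m, and z ∈ 𝔻 with |z| = r such that |a₀|^p·φ₀(r) + Σ_{n=1}^∞ |a_n|φ_n(r) + Σ_{n=1}^∞ |a_n|²·[φ_{2n}(r)/(1+|a₀|) + Φ_{2n+1}(r)] + |f(ω(z)) − a₀| > φ₀(r); in fact one may take ω(z) = z^m and f(z) = (a−z)/(1−az) with a ∈ [0,1) sufficiently close to 1. -/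
/-!
Take `f(z) = (a - z)/(1 - a z)` with `0 < a < 1`, `ω(z) = z^m` and `z = r`, and write `s = r^m`.
The Bohr-type quantity is `a^p φ₀ + (1 - a²) Σ aⁿ φₙ₊₁ + (1 - a²) s/(1 - a s)` plus a nonnegative
quadratic term, so its excess over `φ₀` is at least `(1 - a) G(a)`, where
`G(a) = -((1 - a^p)/(1 - a)) φ₀ + (1 + a) Σ aⁿ φₙ₊₁ + (1 + a) s/(1 - a s)`.
As `a → 1⁻`, Abel's limit theorem and the derivative of `a ↦ a^p` at `1` give
`G(a) → -p φ₀ + 2 Φ₁ + 2 s/(1 - s) = -2 Ψ₂(r) > 0`.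
-/

open Filter Set Topology

theorem tendsto_one_sub_rpow_div_one_sub (p : ℝ) :
    Tendsto (fun a : ℝ => (1 - a ^ p) / (1 - a)) (𝓝[<] 1) (𝓝 p) := by
  have hd : HasDerivAt (fun x : ℝ => x ^ p) p 1 := by
    simpa using Real.hasDerivAt_rpow_const (x := 1) (p := p) (Or.inl one_ne_zero)
  refine ((hasDerivAt_iff_tendsto_slope.mp hd).mono_left
    (nhdsWithin_mono _ fun x hx => ne_of_lt hx)).congr' ?_
  filter_upwards with a
  rw [slope_def_field, Real.one_rpow, ← neg_div_neg_eq, neg_sub, neg_sub]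

theorem exists_lt_rpow_mul_add_tsum_add {p φ₀ s : ℝ} {c : ℕ → ℝ} (hc : Summable c) (hs : s ≠ 1)
    (h : p * φ₀ < 2 * (∑' n, c n + s / (1 - s))) :
    ∃ a ∈ Ioo (0 : ℝ) 1, φ₀ < a ^ p * φ₀ + (1 - a ^ 2) * ∑' n, c n * a ^ n
      + (1 - a ^ 2) * s / (1 - a * s) := by
  set G : ℝ → ℝ := fun a => -((1 - a ^ p) / (1 - a) * φ₀)
    + (1 + a) * ∑' n, c n * a ^ n + (1 + a) * (s / (1 - a * s))
  have hs' : 1 - 1 * s ≠ 0 := by rw [one_mul, sub_ne_zero]; exact hs.symm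
  have hG : Tendsto G (𝓝[<] 1)
      (𝓝 (-(p * φ₀) + (1 + 1) * ∑' n, c n + (1 + 1) * (s / (1 - 1 * s)))) := by
    have hlin : Tendsto (fun a : ℝ => 1 + a) (𝓝[<] 1) (𝓝 (1 + 1)) :=
      tendsto_nhdsWithin_of_tendsto_nhds ((continuous_const.add continuous_id).tendsto 1)
    have hfrac : Tendsto (fun a : ℝ => s / (1 - a * s)) (𝓝[<] 1) (𝓝 (s / (1 - 1 * s))) :=
      tendsto_nhdsWithin_of_tendsto_nhds (tendsto_const_nhds.div
        ((continuous_const.sub (continuous_id.mul continuous_const)).tendsto 1) hs')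
    exact (((tendsto_one_sub_rpow_div_one_sub p).mul_const φ₀).neg.add
      (hlin.mul (Real.tendsto_tsum_powerSeries_nhdsWithin_lt hc.hasSum.tendsto_sum_nat))).add
      (hlin.mul hfrac)
  have hlim : 0 < -(p * φ₀) + (1 + 1) * ∑' n, c n + (1 + 1) * (s / (1 - 1 * s)) := by
    rw [one_mul]; linarith
  obtain ⟨a, hGa, ha⟩ :=
    ((hG.eventually (eventually_gt_nhds hlim)).and (Ioo_mem_nhdsLT zero_lt_one)).exists
  refine ⟨a, ha, ?_⟩
  have h1a : 1 - a ≠ 0 := (sub_pos.mpr ha.2).ne'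
  have hsplit : a ^ p * φ₀ + (1 - a ^ 2) * ∑' n, c n * a ^ n + (1 - a ^ 2) * s / (1 - a * s)
      = φ₀ + (1 - a) * G a := by
    simp only [G]; field_simp; ring
  rw [hsplit]
  linarith [mul_pos (sub_pos.mpr ha.2) hGa]

noncomputable def mobius (a w : ℂ) : ℂ := (a - w) / (1 - a * w)

def mobiusCoeff (a : ℂ) : ℕ → ℂ
  | 0 => a
  | n + 1 => (a ^ 2 - 1) * a ^ n

theorem hasSum_mobiusCoeff {a w : ℂ} (ha : ‖a‖ ≤ 1) (hw : ‖w‖ < 1) :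
    HasSum (fun n => mobiusCoeff a n * w ^ n) (mobius a w) := by
  have h : ‖a * w‖ < 1 := by
    rw [norm_mul]; exact (mul_le_of_le_one_left (norm_nonneg w) ha).trans_lt hw
  have hne : 1 - a * w ≠ 0 := fun h0 => by
    rw [← eq_of_sub_eq_zero h0, norm_one] at h; exact lt_irrefl _ h
  have htail := (hasSum_geometric_of_norm_lt_one h).mul_left ((a ^ 2 - 1) * w)
  refine (hasSum_nat_add_iff' 1).mp ?_
  have hterm : (fun n => mobiusCoeff a (n + 1) * w ^ (n + 1))
      = fun n => (a ^ 2 - 1) * w * (a * w) ^ n := by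
    ext n
    simp only [mobiusCoeff]
    ring
  have hval : mobius a w - ∑ n ∈ Finset.range 1, mobiusCoeff a n * w ^ n
      = (a ^ 2 - 1) * w * (1 - a * w)⁻¹ := by
    rw [Finset.sum_range_one, mobius, mobiusCoeff]
    field_simp
    ring
  rwa [hterm, hval]

theorem norm_mobius_le_one {a : ℝ} (ha : |a| ≤ 1) {w : ℂ} (hw : ‖w‖ ≤ 1) :
    ‖mobius a w‖ ≤ 1 := by
  rw [mobius, norm_div]
  refine div_le_one_of_le₀ ?_ (norm_nonneg _)
  have hdiff : Complex.normSq (1 - a * w) - Complex.normSq (a - w)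
      = (1 - a ^ 2) * (1 - Complex.normSq w) := by
    simp only [Complex.normSq_apply, Complex.sub_re, Complex.sub_im, Complex.mul_re,
      Complex.mul_im, Complex.one_re, Complex.one_im, Complex.ofReal_re, Complex.ofReal_im]
    ring
  have ha2 : a ^ 2 ≤ 1 := (sq_le_one_iff_abs_le_one a).mpr ha
  have hw2 : Complex.normSq w ≤ 1 := by
    rw [Complex.normSq_eq_norm_sq]; exact pow_le_one₀ (norm_nonneg w) hw
  rw [← sq_le_sq₀ (norm_nonneg _) (norm_nonneg _), ← Complex.normSq_eq_norm_sq,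
    ← Complex.normSq_eq_norm_sq]
  nlinarith [mul_nonneg (sub_nonneg.mpr ha2) (sub_nonneg.mpr hw2)]

theorem norm_mobiusCoeff_succ {a : ℝ} (ha : |a| ≤ 1) (n : ℕ) :
    ‖mobiusCoeff a (n + 1)‖ = (1 - a ^ 2) * |a| ^ n := by
  have ha2 : a ^ 2 ≤ 1 := (sq_le_one_iff_abs_le_one a).mpr ha
  rw [mobiusCoeff, norm_mul, norm_pow, Complex.norm_real, Real.norm_eq_abs,
    ← Complex.ofReal_pow, ← Complex.ofReal_one, ← Complex.ofReal_sub, Complex.norm_real,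
    Real.norm_eq_abs, abs_of_nonpos (sub_nonpos.mpr ha2), neg_sub]

theorem tsum_norm_mobiusCoeff_succ_mul {a : ℝ} (ha : |a| ≤ 1) (c : ℕ → ℝ) :
    ∑' n, ‖mobiusCoeff a (n + 1)‖ * c n = (1 - a ^ 2) * ∑' n, c n * |a| ^ n := by
  simp_rw [norm_mobiusCoeff_succ ha, ← tsum_mul_left]
  congr 1 with n
  ring

theorem norm_mobius_ofReal_sub {a s : ℝ} (ha : |a| ≤ 1) (hs : s ∈ Ico (0 : ℝ) 1) :
    ‖mobius a s - a‖ = (1 - a ^ 2) * s / (1 - a * s) := by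
  have ha2 : a ^ 2 ≤ 1 := (sq_le_one_iff_abs_le_one a).mpr ha
  have has : a * s < 1 := by nlinarith [abs_le.mp ha, hs.1, hs.2]
  have hden : (1 - a * s : ℝ) ≠ 0 := (sub_pos.mpr has).ne'
  have hval : mobius a s - a = (-((1 - a ^ 2) * s / (1 - a * s)) : ℝ) := by
    have : (1 - a * s : ℂ) ≠ 0 := by exact_mod_cast hden
    rw [mobius]; push_cast; field_simp; ring
  rw [hval, Complex.norm_real, Real.norm_eq_abs, abs_neg,
    abs_of_nonneg (div_nonneg (mul_nonneg (sub_nonneg.mpr ha2) hs.1) (sub_pos.mpr has).le)]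

theorem stmt_3_general
    (m : ℕ) (hm : 1 ≤ m) (p : ℝ)
    -- φ ∈ ℱ
    (φ : ℕ → ℝ → ℝ)
    (hφnn : ∀ n, ∀ r ∈ Set.Ico (0:ℝ) 1, 0 ≤ φ n r)
    (hφsum : ∀ r ∈ Set.Ico (0:ℝ) 1, Summable fun n => φ n r)
    -- Ψ₂ and its minimal positive root R₂
    (Ψ : ℝ → ℝ)
    (hΨ : ∀ r : ℝ, Ψ r = (p / 2) * φ 0 r - (∑' n : ℕ, φ (n + 1) r)
            - r ^ m / (1 - r ^ m))
    (R₂ : ℝ) (hR₂ : R₂ ∈ Set.Ioo (0:ℝ) 1)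
    -- Ψ₂ < 0 on the interval (R₂, R₂ + ε) ⊆ (R₂, 1)
    (ε : ℝ) (hRε : R₂ + ε ≤ 1)
    (hΨneg : ∀ r : ℝ, R₂ < r → r < R₂ + ε → Ψ r < 0) :
    ∀ r : ℝ, R₂ < r → r < R₂ + ε →
      ∃ (f : ℂ → ℂ) (a : ℕ → ℂ) (ω : ℂ → ℂ) (z : ℂ),
        (∀ w ∈ Metric.ball (0:ℂ) 1, HasSum (fun n => a n * w ^ n) (f w)) ∧
        (∀ w ∈ Metric.ball (0:ℂ) 1, ‖f w‖ ≤ 1) ∧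
        DifferentiableOn ℂ ω (Metric.ball (0:ℂ) 1) ∧
        (∀ w ∈ Metric.ball (0:ℂ) 1, ‖ω w‖ ≤ 1) ∧
        (∀ k < m, iteratedDeriv k ω 0 = 0) ∧
        iteratedDeriv m ω 0 ≠ 0 ∧
        z ∈ Metric.ball (0:ℂ) 1 ∧ ‖z‖ = r ∧
        φ 0 r < ‖a 0‖ ^ p * φ 0 r
          + (∑' n : ℕ, ‖a (n + 1)‖ * φ (n + 1) r)
          + (∑' n : ℕ, ‖a (n + 1)‖ ^ 2 *
              (φ (2 * (n + 1)) r / (1 + ‖a 0‖)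
                + ∑' k : ℕ, φ (2 * (n + 1) + 1 + k) r))
          + ‖f (ω z) - a 0‖ := by
  intro r hr₁ hr₂
  have hr : r ∈ Ico (0 : ℝ) 1 := ⟨(hR₂.1.trans hr₁).le, hr₂.trans_le hRε⟩
  have hs : r ^ m ∈ Ico (0 : ℝ) 1 := ⟨pow_nonneg hr.1 m, pow_lt_one₀ hr.1 hr.2 (by omega)⟩
  have hsum : Summable fun n => φ (n + 1) r := (hφsum r hr).comp_injective (add_left_injective 1)
  obtain ⟨a, ha, hlt⟩ :=
    exists_lt_rpow_mul_add_tsum_add (p := p) (φ₀ := φ 0 r) hsum hs.2.ne <| by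
      linarith [hΨ r ▸ hΨneg r hr₁ hr₂]
  have habs : |a| = a := abs_of_pos ha.1
  have ha1 : |a| ≤ 1 := habs.trans_le ha.2.le
  have hnorm_a : ‖(a : ℂ)‖ = a := by rw [Complex.norm_real, Real.norm_eq_abs, habs]
  have hnorm_r : ‖(r : ℂ)‖ = r := by rw [Complex.norm_real, Real.norm_eq_abs, abs_of_nonneg hr.1]
  refine ⟨mobius a, mobiusCoeff a, (· ^ m), r,
    fun w hw => hasSum_mobiusCoeff (hnorm_a.trans_le ha.2.le) (mem_ball_zero_iff.mp hw),
    fun w hw => norm_mobius_le_one ha1 (mem_ball_zero_iff.mp hw).le,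
    (differentiable_pow m).differentiableOn,
    fun w hw => by rw [norm_pow]; exact pow_le_one₀ (norm_nonneg w) (mem_ball_zero_iff.mp hw).le,
    fun k hk => by rw [iteratedDeriv_fun_pow_zero, if_neg hk.ne, Nat.cast_zero],
    by rw [iteratedDeriv_fun_pow_zero, if_pos rfl]; exact_mod_cast m.factorial_ne_zero,
    by rw [mem_ball_zero_iff, hnorm_r]; exact hr.2, hnorm_r, ?_⟩
  have hquadratic : 0 ≤ ∑' n, ‖mobiusCoeff a (n + 1)‖ ^ 2 *
      (φ (2 * (n + 1)) r / (1 + ‖mobiusCoeff a 0‖) + ∑' k, φ (2 * (n + 1) + 1 + k) r) :=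
    tsum_nonneg fun n => mul_nonneg (sq_nonneg _) (add_nonneg
      (div_nonneg (hφnn _ r hr) (by positivity)) (tsum_nonneg fun k => hφnn _ r hr))
  have hsub : mobius a ((r : ℂ) ^ m) - mobiusCoeff a 0 = mobius a ((r ^ m : ℝ) : ℂ) - a := by
    push_cast; rfl
  rw [tsum_norm_mobiusCoeff_succ_mul ha1, habs, hsub,
    norm_mobius_ofReal_sub ha1 hs]
  simp only [mobiusCoeff, hnorm_a] at hquadratic ⊢
  linarith

/-- Theorem 2 of the paper, sharpness part.
If `Ψ₂(r) < 0` on some interval `(R₂, R₂+ε)` to the right of the minimal positive root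
`R₂`, then for every `r` in that interval there are `f ∈ ℬ`, `ω ∈ ℬ_m` and `z` with
`|z| = r` for which the Bohr-type quantity exceeds `φ₀(r)`. -/
theorem stmt_3
    (m : ℕ) (hm : 1 ≤ m) (p : ℝ) (hp0 : 0 < p) (hp2 : p ≤ 2)
    -- φ ∈ ℱ
    (φ : ℕ → ℝ → ℝ)
    (hφc : ∀ n, ContinuousOn (φ n) (Set.Ico (0:ℝ) 1))
    (hφnn : ∀ n, ∀ r ∈ Set.Ico (0:ℝ) 1, 0 ≤ φ n r)
    (hφsum : ∀ r ∈ Set.Ico (0:ℝ) 1, Summable fun n => φ n r)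
    (hφloc : TendstoLocallyUniformlyOn
      (fun N r => ∑ n ∈ Finset.range N, φ n r)
      (fun r => ∑' n, φ n r) Filter.atTop (Set.Ico (0:ℝ) 1))
    -- Ψ₂ and its minimal positive root R₂
    (Ψ : ℝ → ℝ)
    (hΨ : ∀ r : ℝ, Ψ r = (p / 2) * φ 0 r - (∑' n : ℕ, φ (n + 1) r)
            - r ^ m / (1 - r ^ m))
    (R₂ : ℝ) (hR₂ : R₂ ∈ Set.Ioo (0:ℝ) 1) (hroot : Ψ R₂ = 0)
    (hmin : ∀ r ∈ Set.Ioo (0:ℝ) 1, Ψ r = 0 → R₂ ≤ r)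
    -- Ψ₂ < 0 on the interval (R₂, R₂ + ε) ⊆ (R₂, 1)
    (ε : ℝ) (hε : 0 < ε) (hRε : R₂ + ε ≤ 1)
    (hΨneg : ∀ r : ℝ, R₂ < r → r < R₂ + ε → Ψ r < 0) :
    ∀ r : ℝ, R₂ < r → r < R₂ + ε →
      ∃ (f : ℂ → ℂ) (a : ℕ → ℂ) (ω : ℂ → ℂ) (z : ℂ),
        (∀ w ∈ Metric.ball (0:ℂ) 1, HasSum (fun n => a n * w ^ n) (f w)) ∧
        (∀ w ∈ Metric.ball (0:ℂ) 1, ‖f w‖ ≤ 1) ∧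
        DifferentiableOn ℂ ω (Metric.ball (0:ℂ) 1) ∧
        (∀ w ∈ Metric.ball (0:ℂ) 1, ‖ω w‖ ≤ 1) ∧
        (∀ k < m, iteratedDeriv k ω 0 = 0) ∧
        iteratedDeriv m ω 0 ≠ 0 ∧
        z ∈ Metric.ball (0:ℂ) 1 ∧ ‖z‖ = r ∧
        φ 0 r < ‖a 0‖ ^ p * φ 0 r
          + (∑' n : ℕ, ‖a (n + 1)‖ * φ (n + 1) r)
          + (∑' n : ℕ, ‖a (n + 1)‖ ^ 2 *
              (φ (2 * (n + 1)) r / (1 + ‖a 0‖)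
                + ∑' k : ℕ, φ (2 * (n + 1) + 1 + k) r))
          + ‖f (ω z) - a 0‖ :=
  stmt_3_general m hm p φ hφnn hφsum Ψ hΨ R₂ hR₂ ε hRε hΨneg
end

section
/- Let p ∈ (0,2] and φ = {φ_n}_{n=0}^∞ ∈ ℱ. Define Ψ₃(r) = (p/2)·φ₀(r) − Σ_{n=1}^∞ (n+1)φ_n(r) and let R₃ be the minimal root of Ψ₃(r) = 0 in (0,1). Suppose Ψ₃(r) < 0 on some interval (R₃, R₃+ε), ε > 0. Then for every r ∈ (R₃, R₃+ε) there exists a Schwarz function f(z) = Σ_{n=1}^∞ a_n z^n such that |a₁|^p·φ₀(r) + Σ_{n=1}^∞ (n+1)|a_{n+1}|φ_n(r) > φ₀(r); in fact one may take f(z) = z(a−z)/(1−az) with a ∈ [0,1) sufficiently close to 1. -/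
/-!
For `0 < α < 1` the Schwarz function `z (α - z) / (1 - α z)` has `|a₁| = α` and
`|a_{n+2}| = (1 - α²) αⁿ`, so the functional exceeds `φ₀(r)` exactly when
`φ₀(r) (1 - α^p) / (1 - α²) < Σ (n + 2) φ_{n+1}(r) αⁿ`. As `α → 1⁻` the left side tends to
`(p / 2) φ₀(r)` (a ratio of derivatives at `1`) and the right side to `Σ (n + 2) φ_{n+1}(r)`
(Abel's theorem), and `Ψ₃(r) < 0` says precisely that the first limit is the smaller one.
-/

open Filter Topology

lemma norm_ofReal_mul_lt_one {α : ℝ} (hα : |α| ≤ 1) {w : ℂ} (hw : ‖w‖ < 1) :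
    ‖(α : ℂ) * w‖ < 1 := by
  rw [norm_mul, Complex.norm_real, Real.norm_eq_abs]
  nlinarith [abs_nonneg α, norm_nonneg w]

lemma norm_ofReal_sub_le_norm_one_sub_mul {α : ℝ} (hα : |α| ≤ 1) {w : ℂ} (hw : ‖w‖ ≤ 1) :
    ‖(α : ℂ) - w‖ ≤ ‖1 - α * w‖ := by
  have key : Complex.normSq (1 - α * w) - Complex.normSq (α - w) =
      (1 - α ^ 2) * (1 - Complex.normSq w) := by
    simp only [Complex.normSq_apply, Complex.sub_re, Complex.sub_im, Complex.one_re,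
      Complex.one_im, Complex.mul_re, Complex.mul_im, Complex.ofReal_re, Complex.ofReal_im]
    ring
  have hα2 : 0 ≤ 1 - α ^ 2 := sub_nonneg.mpr ((sq_le_one_iff_abs_le_one α).mpr hα)
  have hw2 : 0 ≤ 1 - Complex.normSq w := by
    rw [Complex.normSq_eq_norm_sq]; nlinarith [norm_nonneg w]
  rw [← sq_le_sq₀ (norm_nonneg _) (norm_nonneg _), ← Complex.normSq_eq_norm_sq,
    ← Complex.normSq_eq_norm_sq]
  nlinarith [mul_nonneg hα2 hw2]

namespace ExtremalSchwarz

noncomputable def fn (α : ℝ) (z : ℂ) : ℂ := z * (α - z) / (1 - α * z)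

def coeff (α : ℝ) : ℕ → ℝ
  | 0 => 0
  | 1 => α
  | n + 2 => -(1 - α ^ 2) * α ^ n

variable {α : ℝ}

@[simp] lemma coeff_zero : coeff α 0 = 0 := rfl

@[simp] lemma coeff_one : coeff α 1 = α := rfl

@[simp] lemma coeff_add_two (n : ℕ) : coeff α (n + 2) = -(1 - α ^ 2) * α ^ n := rfl

lemma hasSum_coeff (hα : |α| ≤ 1) {w : ℂ} (hw : ‖w‖ < 1) :
    HasSum (fun n => (coeff α n : ℂ) * w ^ n) (fn α w) := by
  have hαw := norm_ofReal_mul_lt_one hα hw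
  have hne : (1 : ℂ) - α * w ≠ 0 := sub_ne_zero.mpr fun h => by simp [← h] at hαw
  have htail : HasSum (fun n => (coeff α (n + 2) : ℂ) * w ^ (n + 2))
      (-(1 - (α : ℂ) ^ 2) * w ^ 2 * (1 - α * w)⁻¹) :=
    ((hasSum_geometric_of_norm_lt_one hαw).mul_left _).congr_fun fun n => by
      push_cast [coeff_add_two]
      ring
  suffices hval : fn α w = -(1 - (α : ℂ) ^ 2) * w ^ 2 * (1 - α * w)⁻¹
      + ∑ i ∈ Finset.range 2, (coeff α i : ℂ) * w ^ i by
    rw [hval]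
    exact (hasSum_nat_add_iff 2).mp htail
  simp only [Finset.sum_range_succ, Finset.sum_range_zero, coeff_zero, coeff_one, fn,
    Complex.ofReal_zero, zero_mul, zero_add, pow_one, div_eq_mul_inv]
  linear_combination (α * w : ℂ) * mul_inv_cancel₀ hne

lemma norm_fn_le_one (hα : |α| ≤ 1) {w : ℂ} (hw : ‖w‖ < 1) : ‖fn α w‖ ≤ 1 := by
  have hpos : 0 < ‖1 - (α : ℂ) * w‖ := by
    have := norm_sub_norm_le (1 : ℂ) (α * w)
    rw [norm_one] at this
    linarith [norm_ofReal_mul_lt_one hα hw]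
  rw [fn, norm_div, norm_mul, div_le_one hpos]
  calc ‖w‖ * ‖(α : ℂ) - w‖ ≤ 1 * ‖1 - (α : ℂ) * w‖ :=
        mul_le_mul hw.le (norm_ofReal_sub_le_norm_one_sub_mul hα hw.le) (norm_nonneg _) zero_le_one
    _ = _ := one_mul _

lemma abs_coeff_add_two (hα : |α| ≤ 1) (n : ℕ) : |coeff α (n + 2)| = (1 - α ^ 2) * |α| ^ n := by
  have hα2 : 0 ≤ 1 - α ^ 2 := sub_nonneg.mpr ((sq_le_one_iff_abs_le_one α).mpr hα)
  rw [coeff, abs_mul, abs_neg, abs_of_nonneg hα2, abs_pow]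

end ExtremalSchwarz

lemma tendsto_one_sub_rpow_div_one_sub_sq (p : ℝ) :
    Tendsto (fun x : ℝ => (1 - x ^ p) / (1 - x ^ 2)) (𝓝[≠] 1) (𝓝 (p / 2)) := by
  have hpow : Tendsto (slope (fun x : ℝ => x ^ p) 1) (𝓝[≠] 1) (𝓝 p) := by
    simpa using hasDerivAt_iff_tendsto_slope.mp
      (Real.hasDerivAt_rpow_const (x := 1) (p := p) (Or.inl one_ne_zero))
  have hsq : Tendsto (slope (fun x : ℝ => x ^ 2) 1) (𝓝[≠] 1) (𝓝 2) := by
    simpa using hasDerivAt_iff_tendsto_slope.mp (hasDerivAt_pow 2 (1 : ℝ))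
  refine (hpow.div hsq two_ne_zero).congr' (eventually_nhdsWithin_of_forall fun x hx => ?_)
  have hx : x - 1 ≠ 0 := sub_ne_zero.mpr hx
  simp only [Pi.div_apply, slope_def_field, Real.one_rpow, one_pow]
  rw [div_div_div_cancel_right₀ hx, ← neg_div_neg_eq, neg_sub, neg_sub]

lemma exists_lt_rpow_mul_add_one_sub_sq_mul_tsum {b : ℕ → ℝ} (hb : Summable b) {A p : ℝ}
    (h : p / 2 * A < ∑' n, b n) :
    ∃ α, 0 < α ∧ α < 1 ∧ A < α ^ p * A + (1 - α ^ 2) * ∑' n, b n * α ^ n := by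
  have hAbel := Real.tendsto_tsum_powerSeries_nhdsWithin_lt hb.hasSum.tendsto_sum_nat
  have hratio := ((tendsto_one_sub_rpow_div_one_sub_sq p).const_mul A).mono_left
    (nhdsLT_le_nhdsNE 1)
  rw [mul_comm A] at hratio
  obtain ⟨α, hlt, hα0, hα1⟩ := ((hratio.eventually_lt hAbel h).and
    (show ∀ᶠ x in 𝓝[<] (1 : ℝ), x ∈ Set.Ioo 0 1 from Ioo_mem_nhdsLT zero_lt_one)).exists
  refine ⟨α, hα0, hα1, ?_⟩
  have hα2 : 0 < 1 - α ^ 2 := by nlinarith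
  rw [← mul_div_assoc, div_lt_iff₀ hα2] at hlt
  linarith

theorem stmt_5_general
    (p : ℝ) (hp0 : 0 < p)
    -- φ ∈ ℱ
    (φ : ℕ → ℝ → ℝ)
    (hφnn : ∀ n, ∀ r ∈ Set.Ico (0:ℝ) 1, 0 ≤ φ n r)
    -- Ψ₃ and its minimal root R₃ in (0,1)
    (Ψ : ℝ → ℝ)
    (hΨ : ∀ r : ℝ, Ψ r = (p / 2) * φ 0 r - ∑' n : ℕ, ((n : ℝ) + 2) * φ (n + 1) r)
    (R₃ : ℝ) (hR₃ : R₃ ∈ Set.Ioo (0:ℝ) 1)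
    -- Ψ₃ < 0 on the interval (R₃, R₃ + ε) ⊆ (R₃, 1)
    (ε : ℝ) (hRε : R₃ + ε ≤ 1)
    (hΨneg : ∀ r : ℝ, R₃ < r → r < R₃ + ε → Ψ r < 0) :
    ∀ r : ℝ, R₃ < r → r < R₃ + ε →
      ∃ (f : ℂ → ℂ) (a : ℕ → ℂ),
        a 0 = 0 ∧
        (∀ w ∈ Metric.ball (0:ℂ) 1, HasSum (fun n => a n * w ^ n) (f w)) ∧
        (∀ w ∈ Metric.ball (0:ℂ) 1, ‖f w‖ ≤ 1) ∧
        φ 0 r < ‖a 1‖ ^ p * φ 0 r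
          + (∑' n : ℕ, ((n : ℝ) + 2) * ‖a (n + 2)‖ * φ (n + 1) r) := by
  intro r hr₁ hr₂
  have hr : r ∈ Set.Ico (0 : ℝ) 1 := ⟨hR₃.1.le.trans hr₁.le, by linarith⟩
  have hlt : p / 2 * φ 0 r < ∑' n : ℕ, ((n : ℝ) + 2) * φ (n + 1) r := by
    linarith [hΨ r ▸ hΨneg r hr₁ hr₂]
  have hsum : Summable fun n : ℕ => ((n : ℝ) + 2) * φ (n + 1) r := by
    by_contra h
    -- otherwise the `tsum` in `hlt` is the junk value `0`
    rw [tsum_eq_zero_of_not_summable h] at hlt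
    exact hlt.not_ge (mul_nonneg (by positivity) (hφnn 0 r hr))
  obtain ⟨α, hα0, hα1, hkey⟩ := exists_lt_rpow_mul_add_one_sub_sq_mul_tsum hsum hlt
  have hα : |α| ≤ 1 := (abs_of_pos hα0).trans_le hα1.le
  refine ⟨ExtremalSchwarz.fn α, fun n => ExtremalSchwarz.coeff α n, by simp,
    fun w hw => ExtremalSchwarz.hasSum_coeff hα (mem_ball_zero_iff.mp hw),
    fun w hw => ExtremalSchwarz.norm_fn_le_one hα (mem_ball_zero_iff.mp hw), ?_⟩
  have htail : ∑' n : ℕ, ((n : ℝ) + 2) * ‖(ExtremalSchwarz.coeff α (n + 2) : ℂ)‖ * φ (n + 1) r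
      = (1 - α ^ 2) * ∑' n : ℕ, ((n : ℝ) + 2) * φ (n + 1) r * α ^ n := by
    rw [← tsum_mul_left]
    refine tsum_congr fun n => ?_
    rw [Complex.norm_real, Real.norm_eq_abs, ExtremalSchwarz.abs_coeff_add_two hα, abs_of_pos hα0]
    ring
  rw [htail, Complex.norm_real, ExtremalSchwarz.coeff_one, Real.norm_eq_abs, abs_of_pos hα0]
  exact hkey

/-- Theorem 3 of the paper, sharpness part.
If `Ψ₃(r) < 0` on some interval `(R₃, R₃+ε)` to the right of the minimal root `R₃`,
then for every `r` in that interval there is a Schwarz function `f(z) = Σ_{n≥1} a_n z^n`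
for which `|a₁|^p φ₀(r) + Σ_{n≥1}(n+1)|a_{n+1}|φ_n(r) > φ₀(r)`. -/
theorem stmt_5
    (p : ℝ) (hp0 : 0 < p) (hp2 : p ≤ 2)
    -- φ ∈ ℱ
    (φ : ℕ → ℝ → ℝ)
    (hφc : ∀ n, ContinuousOn (φ n) (Set.Ico (0:ℝ) 1))
    (hφnn : ∀ n, ∀ r ∈ Set.Ico (0:ℝ) 1, 0 ≤ φ n r)
    (hφsum : ∀ r ∈ Set.Ico (0:ℝ) 1, Summable fun n => φ n r)
    (hφloc : TendstoLocallyUniformlyOn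
      (fun N r => ∑ n ∈ Finset.range N, φ n r)
      (fun r => ∑' n, φ n r) Filter.atTop (Set.Ico (0:ℝ) 1))
    -- Ψ₃ and its minimal root R₃ in (0,1)
    (Ψ : ℝ → ℝ)
    (hΨ : ∀ r : ℝ, Ψ r = (p / 2) * φ 0 r - ∑' n : ℕ, ((n : ℝ) + 2) * φ (n + 1) r)
    (R₃ : ℝ) (hR₃ : R₃ ∈ Set.Ioo (0:ℝ) 1) (hroot : Ψ R₃ = 0)
    (hmin : ∀ r ∈ Set.Ioo (0:ℝ) 1, Ψ r = 0 → R₃ ≤ r)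
    -- Ψ₃ < 0 on the interval (R₃, R₃ + ε) ⊆ (R₃, 1)
    (ε : ℝ) (hε : 0 < ε) (hRε : R₃ + ε ≤ 1)
    (hΨneg : ∀ r : ℝ, R₃ < r → r < R₃ + ε → Ψ r < 0) :
    ∀ r : ℝ, R₃ < r → r < R₃ + ε →
      ∃ (f : ℂ → ℂ) (a : ℕ → ℂ),
        a 0 = 0 ∧
        (∀ w ∈ Metric.ball (0:ℂ) 1, HasSum (fun n => a n * w ^ n) (f w)) ∧
        (∀ w ∈ Metric.ball (0:ℂ) 1, ‖f w‖ ≤ 1) ∧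
        φ 0 r < ‖a 1‖ ^ p * φ 0 r
          + (∑' n : ℕ, ((n : ℝ) + 2) * ‖a (n + 2)‖ * φ (n + 1) r) :=
  stmt_5_general p hp0 φ hφnn Ψ hΨ R₃ hR₃ ε hRε hΨneg
end

section
/- Let m ∈ ℕ, p ∈ (0,2], and φ = {φ_n}_{n=0}^∞ ∈ ℱ. Define Ψ₄(r) = (p/2)·φ₀(r) − Σ_{n=1}^∞ (n+1)φ_n(r) − r^m(2−r^m)/(1−r^m)² and let R₄ be the minimal positive root of Ψ₄(r) = 0. Suppose Ψ₄(r) < 0 on some interval (R₄, R₄+ε), ε > 0. Then for every r ∈ (R₄, R₄+ε) there exist a Schwarz function f(z) = Σ_{n=1}^∞ a_n z^n, a function ω ∈ ℬ_m, and z ∈ 𝔻 with |z| = r such that |a₁|^p·φ₀(r) + Σ_{n=1}^∞ (n+1)|a_{n+1}|φ_n(r) + |f′(ω(z)) − a₁| > φ₀(r); in fact one may take ω(z) = z^m and f(z) = z(a−z)/(1−az) with a ∈ [0,1) sufficiently close to 1. -/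
/-!
Take `z = r`, `ω(z) = z^m` and the degree-two Blaschke product `f_a(z) = z(a - z)/(1 - az)`,
whose Taylor coefficients are `a₁ = a` and `a_{n+2} = -(1 - a²)aⁿ`. With `x = r^m`, the left-hand
side minus `φ₀(r)` is `(aᵖ - 1)φ₀(r) + (1 - a²)(Σ (n+2)aⁿφ_{n+1}(r) + x(2 - ax)/(1 - ax)²)`.
Divided by `1 - a`, this tends as `a → 1⁻` to
`-pφ₀(r) + 2(Σ (n+2)φ_{n+1}(r) + x(2 - x)/(1 - x)²) = -2Ψ₄(r) > 0`; truncating the series to a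
finite partial sum, which is still close to the full sum, makes the limit elementary.
-/

open Filter Topology Set

noncomputable def sharpSchwarz (a w : ℂ) : ℂ := w * (a - w) / (1 - a * w)

noncomputable def sharpSchwarzCoeff (a : ℂ) : ℕ → ℂ
  | 0 => 0
  | 1 => a
  | n + 2 => (a ^ 2 - 1) * a ^ n

theorem hasSum_sharpSchwarzCoeff {a w : ℂ} (h : ‖a * w‖ < 1) :
    HasSum (fun n => sharpSchwarzCoeff a n * w ^ n) (sharpSchwarz a w) := by
  have hne : 1 - a * w ≠ 0 := fun h0 => by
    rw [show a * w = 1 by linear_combination -h0] at h; simp at h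
  have htail : HasSum (fun n => sharpSchwarzCoeff a (n + 2) * w ^ (n + 2))
      (sharpSchwarz a w - ∑ i ∈ Finset.range 2, sharpSchwarzCoeff a i * w ^ i) := by
    have hgeom := (hasSum_geometric_of_norm_lt_one h).mul_left ((a ^ 2 - 1) * w ^ 2)
    have hterm : (fun n => (a ^ 2 - 1) * w ^ 2 * (a * w) ^ n)
        = fun n => sharpSchwarzCoeff a (n + 2) * w ^ (n + 2) := by
      funext n; simp only [sharpSchwarzCoeff]; ring
    have hval : (a ^ 2 - 1) * w ^ 2 * (1 - a * w)⁻¹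
        = sharpSchwarz a w - ∑ i ∈ Finset.range 2, sharpSchwarzCoeff a i * w ^ i := by
      simp only [sharpSchwarz, Finset.sum_range_succ, Finset.sum_range_zero, sharpSchwarzCoeff]
      field_simp
      ring
    rwa [hterm, hval] at hgeom
  exact (hasSum_nat_add_iff' 2).mp htail

theorem norm_one_sub_mul_sq_sub_norm_sub_sq (a : ℝ) (w : ℂ) :
    ‖1 - a * w‖ ^ 2 - ‖a - w‖ ^ 2 = (1 - a ^ 2) * (1 - ‖w‖ ^ 2) := by
  simp only [Complex.sq_norm, Complex.normSq_apply, Complex.sub_re, Complex.sub_im,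
    Complex.mul_re, Complex.mul_im, Complex.one_re, Complex.one_im, Complex.ofReal_re,
    Complex.ofReal_im]
  ring

theorem norm_sharpSchwarz_le_one {a : ℝ} (ha : |a| ≤ 1) {w : ℂ} (hw : ‖w‖ ≤ 1) :
    ‖sharpSchwarz a w‖ ≤ 1 := by
  have hsub : ‖(a : ℂ) - w‖ ≤ ‖1 - a * w‖ := by
    have h1 : 0 ≤ 1 - a ^ 2 := by nlinarith [abs_nonneg a, sq_abs a]
    have h2 : 0 ≤ 1 - ‖w‖ ^ 2 := by nlinarith [norm_nonneg w]
    exact (pow_le_pow_iff_left₀ (norm_nonneg _) (norm_nonneg _) two_ne_zero).mp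
      (by nlinarith [mul_nonneg h1 h2, norm_one_sub_mul_sq_sub_norm_sub_sq a w])
  rw [sharpSchwarz, norm_div, norm_mul]
  exact div_le_one_of_le₀ (by nlinarith [norm_nonneg ((a : ℂ) - w)]) (norm_nonneg _)

theorem hasDerivAt_sharpSchwarz {a w : ℂ} (h : 1 - a * w ≠ 0) :
    HasDerivAt (sharpSchwarz a) (a - (1 - a ^ 2) * w * (2 - a * w) / (1 - a * w) ^ 2) w := by
  have hnum : HasDerivAt (fun w => w * (a - w)) (a - 2 * w) w :=
    ((hasDerivAt_id' w).fun_mul ((hasDerivAt_const w a).fun_sub (hasDerivAt_id' w))).congr_deriv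
      (by ring)
  have hden : HasDerivAt (fun w => 1 - a * w) (-a) w :=
    (((hasDerivAt_id' w).const_mul a).const_sub 1).congr_deriv (by ring)
  refine (hnum.fun_div hden h).congr_deriv ?_
  field_simp
  ring

theorem norm_deriv_sharpSchwarz_ofReal_sub {a x : ℝ} (ha0 : 0 ≤ a) (ha1 : a ≤ 1)
    (hx0 : 0 ≤ x) (hx1 : x < 1) :
    ‖deriv (sharpSchwarz a) x - a‖ = (1 - a ^ 2) * (x * (2 - a * x) / (1 - a * x) ^ 2) := by
  have hax : a * x < 1 := by nlinarith
  have hne : (1 : ℂ) - a * x ≠ 0 := by exact_mod_cast (sub_pos.mpr hax).ne'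
  rw [(hasDerivAt_sharpSchwarz hne).deriv, sub_sub_cancel_left, norm_neg,
    show (1 - (a : ℂ) ^ 2) * x * (2 - a * x) / (1 - a * x) ^ 2
      = ((1 - a ^ 2) * (x * (2 - a * x) / (1 - a * x) ^ 2) : ℝ) by push_cast; ring,
    Complex.norm_real, Real.norm_of_nonneg]
  have : 0 ≤ 1 - a ^ 2 := by nlinarith
  have : 0 ≤ 2 - a * x := by linarith
  positivity

theorem norm_sharpSchwarzCoeff_add_two {a : ℝ} (ha0 : 0 ≤ a) (ha1 : a ≤ 1) (n : ℕ) :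
    ‖sharpSchwarzCoeff a (n + 2)‖ = (1 - a ^ 2) * a ^ n := by
  rw [sharpSchwarzCoeff, show ((a : ℂ) ^ 2 - 1) * a ^ n = ((-((1 - a ^ 2) * a ^ n) : ℝ) : ℂ) by
    push_cast; ring, Complex.norm_real, norm_neg, Real.norm_of_nonneg]
  have : 0 ≤ 1 - a ^ 2 := by nlinarith
  positivity

theorem eventually_lt_rpow_mul_add_one_sub_sq_mul {p c : ℝ} {g : ℝ → ℝ}
    (hg : ContinuousWithinAt g (Iio 1) 1) (h : p * c < 2 * g 1) :
    ∀ᶠ a in 𝓝[<] 1, c < a ^ p * c + (1 - a ^ 2) * g a := by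
  have hslope : Tendsto (slope (fun a : ℝ => a ^ p) 1) (𝓝[<] 1) (𝓝 p) := by
    have hder : HasDerivAt (fun a : ℝ => a ^ p) p 1 := by
      simpa using Real.hasDerivAt_rpow_const (x := 1) (p := p) (Or.inl one_ne_zero)
    exact (hasDerivAt_iff_tendsto_slope.mp hder).mono_left
      (nhdsWithin_mono 1 fun a (ha : a < 1) => ha.ne)
  have hquot : Tendsto (fun a => -slope (fun a : ℝ => a ^ p) 1 a * c + (1 + a) * g a) (𝓝[<] 1)
      (𝓝 (-p * c + (1 + 1) * g 1)) :=
    (hslope.neg.mul_const c).add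
      ((tendsto_const_nhds.add (tendsto_nhdsWithin_of_tendsto_nhds tendsto_id)).mul hg.tendsto)
  filter_upwards [hquot.eventually (eventually_gt_nhds (show (0 : ℝ) < _ by linarith)),
    self_mem_nhdsWithin] with a hpos (ha : a < 1)
  have hfactor : a ^ p * c + (1 - a ^ 2) * g a - c
      = (1 - a) * (-slope (fun a : ℝ => a ^ p) 1 a * c + (1 + a) * g a) := by
    rw [slope_def_field, Real.one_rpow]
    field_simp [(sub_neg.mpr ha).ne]
    ring
  nlinarith [mul_pos (sub_pos.mpr ha) hpos]

theorem exists_lt_sum_range_of_lt_tsum {f : ℕ → ℝ} {b : ℝ} (h : b < ∑' n, f n) :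
    ∃ N, b < ∑ n ∈ Finset.range N, f n := by
  by_cases hf : Summable f
  · exact (hf.hasSum.tendsto_sum_nat.eventually (eventually_gt_nhds h)).exists
  · rw [tsum_eq_zero_of_not_summable hf] at h
    exact ⟨0, by simpa using h⟩

theorem pow_mul_sum_range_le_tsum_pow_mul {c : ℕ → ℝ} (hc : ∀ n, 0 ≤ c n) {a : ℝ}
    (ha0 : 0 ≤ a) (ha1 : a ≤ 1) (hs : Summable fun n => a ^ n * c n) (N : ℕ) :
    a ^ N * ∑ n ∈ Finset.range N, c n ≤ ∑' n, a ^ n * c n := by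
  rw [Finset.mul_sum]
  refine (Finset.sum_le_sum fun n hn => ?_).trans
    (hs.sum_le_tsum _ fun n _ => mul_nonneg (pow_nonneg ha0 n) (hc n))
  exact mul_le_mul_of_nonneg_right
    (pow_le_pow_of_le_one ha0 ha1 (Finset.mem_range.mp hn).le) (hc n)

theorem summable_pow_mul_natCast_add_two_mul {d : ℕ → ℝ} {B : ℝ} (hd0 : ∀ n, 0 ≤ d n)
    (hdB : ∀ n, d n ≤ B) {a : ℝ} (ha0 : 0 ≤ a) (ha1 : a < 1) :
    Summable fun n : ℕ => a ^ n * ((n + 2) * d n) := by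
  have hgeom : Summable fun n : ℕ => ((n : ℝ) + 2) * a ^ n := by
    have ha : ‖a‖ < 1 := by rwa [Real.norm_of_nonneg ha0]
    refine ((summable_pow_mul_geometric_of_norm_lt_one 1 ha).add
      ((summable_geometric_of_norm_lt_one ha).mul_left 2)).congr fun n => ?_
    ring
  refine (hgeom.mul_right B).of_nonneg_of_le (fun n => by positivity [hd0 n]) fun n => ?_
  calc a ^ n * ((n + 2) * d n) = ((n : ℝ) + 2) * a ^ n * d n := by ring
    _ ≤ ((n : ℝ) + 2) * a ^ n * B := by gcongr; exact hdB n

theorem pow_mul_sum_le_tsum_norm_sharpSchwarzCoeff_mul {d : ℕ → ℝ} {B : ℝ}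
    (hd0 : ∀ n, 0 ≤ d n) (hdB : ∀ n, d n ≤ B) {a : ℝ} (ha0 : 0 ≤ a) (ha1 : a < 1) (N : ℕ) :
    (1 - a ^ 2) * (a ^ N * ∑ n ∈ Finset.range N, ((n : ℝ) + 2) * d n)
      ≤ ∑' n : ℕ, ((n : ℝ) + 2) * ‖sharpSchwarzCoeff a (n + 2)‖ * d n := by
  have hseries : ∑' n : ℕ, ((n : ℝ) + 2) * ‖sharpSchwarzCoeff a (n + 2)‖ * d n
      = (1 - a ^ 2) * ∑' n : ℕ, a ^ n * ((n + 2) * d n) := by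
    rw [← tsum_mul_left]
    congr 1 with n
    rw [norm_sharpSchwarzCoeff_add_two ha0 ha1.le]
    ring
  rw [hseries]
  exact mul_le_mul_of_nonneg_left
    (pow_mul_sum_range_le_tsum_pow_mul (fun n => by positivity [hd0 n]) ha0 ha1.le
      (summable_pow_mul_natCast_add_two_mul hd0 hdB ha0 ha1) N)
    (by nlinarith)

theorem stmt_7_general
    (m : ℕ) (hm : 1 ≤ m) (p : ℝ)
    -- φ ∈ ℱ
    (φ : ℕ → ℝ → ℝ)
    (hφnn : ∀ n, ∀ r ∈ Set.Ico (0:ℝ) 1, 0 ≤ φ n r)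
    (hφsum : ∀ r ∈ Set.Ico (0:ℝ) 1, Summable fun n => φ n r)
    -- Ψ₄ and its minimal positive root R₄
    (Ψ : ℝ → ℝ)
    (hΨ : ∀ r : ℝ, Ψ r = (p / 2) * φ 0 r - (∑' n : ℕ, ((n : ℝ) + 2) * φ (n + 1) r)
            - r ^ m * (2 - r ^ m) / (1 - r ^ m) ^ 2)
    (R₄ : ℝ) (hR₄ : R₄ ∈ Set.Ioo (0:ℝ) 1)
    -- Ψ₄ < 0 on the interval (R₄, R₄ + ε) ⊆ (R₄, 1)
    (ε : ℝ) (hRε : R₄ + ε ≤ 1)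
    (hΨneg : ∀ r : ℝ, R₄ < r → r < R₄ + ε → Ψ r < 0) :
    ∀ r : ℝ, R₄ < r → r < R₄ + ε →
      ∃ (f : ℂ → ℂ) (a : ℕ → ℂ) (ω : ℂ → ℂ) (z : ℂ),
        a 0 = 0 ∧
        (∀ w ∈ Metric.ball (0:ℂ) 1, HasSum (fun n => a n * w ^ n) (f w)) ∧
        (∀ w ∈ Metric.ball (0:ℂ) 1, ‖f w‖ ≤ 1) ∧
        DifferentiableOn ℂ ω (Metric.ball (0:ℂ) 1) ∧
        (∀ w ∈ Metric.ball (0:ℂ) 1, ‖ω w‖ ≤ 1) ∧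
        (∀ k < m, iteratedDeriv k ω 0 = 0) ∧
        iteratedDeriv m ω 0 ≠ 0 ∧
        z ∈ Metric.ball (0:ℂ) 1 ∧ ‖z‖ = r ∧
        φ 0 r < ‖a 1‖ ^ p * φ 0 r
          + (∑' n : ℕ, ((n : ℝ) + 2) * ‖a (n + 2)‖ * φ (n + 1) r)
          + ‖deriv f (ω z) - a 1‖ := by
  intro r hr hrε
  have hr0 : 0 < r := hR₄.1.trans hr
  have hr1 : r < 1 := hrε.trans_le hRε
  have hrI : r ∈ Ico (0 : ℝ) 1 := ⟨hr0.le, hr1⟩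
  set x := r ^ m with hx
  have hx1 : x < 1 := pow_lt_one₀ hr0.le hr1 (by omega)
  obtain ⟨N, hN⟩ : ∃ N, p / 2 * φ 0 r - x * (2 - x) / (1 - x) ^ 2
      < ∑ n ∈ Finset.range N, ((n : ℝ) + 2) * φ (n + 1) r :=
    exists_lt_sum_range_of_lt_tsum (by linarith [hΨ r ▸ hΨneg r hr hrε])
  set P := ∑ n ∈ Finset.range N, ((n : ℝ) + 2) * φ (n + 1) r
  have hg : ContinuousWithinAt (fun a : ℝ => a ^ N * P + x * (2 - a * x) / (1 - a * x) ^ 2)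
      (Iio 1) 1 := by
    have : (1 - 1 * x) ^ 2 ≠ 0 := pow_ne_zero 2 (by linarith)
    exact ContinuousAt.continuousWithinAt (by fun_prop (disch := assumption))
  obtain ⟨a, hlt, ha0, ha1⟩ := ((eventually_lt_rpow_mul_add_one_sub_sq_mul (p := p) (c := φ 0 r) hg
    (by simp only [one_pow, one_mul]; linarith)).and (Ioo_mem_nhdsLT zero_lt_one)).exists
  have hball : ∀ w ∈ Metric.ball (0 : ℂ) 1, ‖w‖ < 1 := fun w hw => mem_ball_zero_iff.mp hw
  refine ⟨sharpSchwarz a, sharpSchwarzCoeff a, (· ^ m), r, rfl,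
    fun w hw => hasSum_sharpSchwarzCoeff ?_,
    fun w hw => norm_sharpSchwarz_le_one (abs_le.mpr ⟨by linarith, ha1.le⟩) (hball w hw).le,
    (differentiable_pow m).differentiableOn,
    fun w hw => by simpa using pow_le_one₀ (norm_nonneg w) (hball w hw).le,
    fun k hk => by simp [Nat.sub_ne_zero_of_lt hk],
    by simp, by simpa [abs_of_pos hr0] using hr1, by simp [abs_of_pos hr0], ?_⟩
  · rw [norm_mul, Complex.norm_of_nonneg ha0.le]
    exact mul_lt_one_of_nonneg_of_lt_one_left ha0.le ha1 (hball w hw).le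
  have hφB : ∀ n, φ (n + 1) r ≤ ∑' k, φ k r := fun n =>
    (hφsum r hrI).le_tsum _ fun k _ => hφnn k r hrI
  have htail := pow_mul_sum_le_tsum_norm_sharpSchwarzCoeff_mul
    (fun n => hφnn (n + 1) r hrI) hφB ha0.le ha1 N
  have hz : (fun w : ℂ => w ^ m) r = (x : ℂ) := by simp [hx]
  rw [show sharpSchwarzCoeff a 1 = a from rfl, Complex.norm_of_nonneg ha0.le, hz,
    norm_deriv_sharpSchwarz_ofReal_sub ha0.le ha1.le (by positivity) hx1]
  linarith

/-- Theorem 4 of the paper, sharpness part.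
If `Ψ₄(r) < 0` on some interval `(R₄, R₄+ε)` to the right of the minimal positive root
`R₄`, then for every `r` in that interval there are a Schwarz function `f`, a function
`ω ∈ ℬ_m` and `z` with `|z| = r` such that
`|a₁|^p φ₀(r) + Σ_{n≥1}(n+1)|a_{n+1}|φ_n(r) + |f′(ω(z)) − a₁| > φ₀(r)`. -/
theorem stmt_7
    (m : ℕ) (hm : 1 ≤ m) (p : ℝ) (hp0 : 0 < p) (hp2 : p ≤ 2)
    -- φ ∈ ℱ
    (φ : ℕ → ℝ → ℝ)
    (hφc : ∀ n, ContinuousOn (φ n) (Set.Ico (0:ℝ) 1))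
    (hφnn : ∀ n, ∀ r ∈ Set.Ico (0:ℝ) 1, 0 ≤ φ n r)
    (hφsum : ∀ r ∈ Set.Ico (0:ℝ) 1, Summable fun n => φ n r)
    (hφloc : TendstoLocallyUniformlyOn
      (fun N r => ∑ n ∈ Finset.range N, φ n r)
      (fun r => ∑' n, φ n r) Filter.atTop (Set.Ico (0:ℝ) 1))
    -- Ψ₄ and its minimal positive root R₄
    (Ψ : ℝ → ℝ)
    (hΨ : ∀ r : ℝ, Ψ r = (p / 2) * φ 0 r - (∑' n : ℕ, ((n : ℝ) + 2) * φ (n + 1) r)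
            - r ^ m * (2 - r ^ m) / (1 - r ^ m) ^ 2)
    (R₄ : ℝ) (hR₄ : R₄ ∈ Set.Ioo (0:ℝ) 1) (hroot : Ψ R₄ = 0)
    (hmin : ∀ r ∈ Set.Ioo (0:ℝ) 1, Ψ r = 0 → R₄ ≤ r)
    -- Ψ₄ < 0 on the interval (R₄, R₄ + ε) ⊆ (R₄, 1)
    (ε : ℝ) (hε : 0 < ε) (hRε : R₄ + ε ≤ 1)
    (hΨneg : ∀ r : ℝ, R₄ < r → r < R₄ + ε → Ψ r < 0) :
    ∀ r : ℝ, R₄ < r → r < R₄ + ε →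
      ∃ (f : ℂ → ℂ) (a : ℕ → ℂ) (ω : ℂ → ℂ) (z : ℂ),
        a 0 = 0 ∧
        (∀ w ∈ Metric.ball (0:ℂ) 1, HasSum (fun n => a n * w ^ n) (f w)) ∧
        (∀ w ∈ Metric.ball (0:ℂ) 1, ‖f w‖ ≤ 1) ∧
        DifferentiableOn ℂ ω (Metric.ball (0:ℂ) 1) ∧
        (∀ w ∈ Metric.ball (0:ℂ) 1, ‖ω w‖ ≤ 1) ∧
        (∀ k < m, iteratedDeriv k ω 0 = 0) ∧
        iteratedDeriv m ω 0 ≠ 0 ∧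
        z ∈ Metric.ball (0:ℂ) 1 ∧ ‖z‖ = r ∧
        φ 0 r < ‖a 1‖ ^ p * φ 0 r
          + (∑' n : ℕ, ((n : ℝ) + 2) * ‖a (n + 2)‖ * φ (n + 1) r)
          + ‖deriv f (ω z) - a 1‖ :=
  stmt_7_general m hm p φ hφnn hφsum Ψ hΨ R₄ hR₄ ε hRε hΨneg
end

section
/- Let f(z) = Σ_{n=0}^∞ a_n z^n be analytic on 𝔻 with |f(z)| ≤ 1, let p ∈ (0,2], m, q ∈ ℕ with q ≥ 2 and 0 < m < q, ω ∈ ℬ_m, and λ ∈ (0,∞). Define Ψ₅(r) = 2λ·r^{q+m}/(1−r^q) − p(1−r^m)/(1+r^m) and let R be the minimal positive root of Ψ₅(r) = 0 in [0,1]. Then for every z ∈ 𝔻 with |z| = r ≤ R one has |f(ω(z))|^p + λ·Σ_{k=1}^∞ |a_{qk+m}|·r^{qk+m} ≤ 1. -/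
/-!
By the Schwarz lemma for a zero of order `m`, `|ω z| ≤ r ^ m`, so the Schwarz–Pick lemma gives
`|f (ω z)| ≤ (|a₀| + r ^ m) / (1 + |a₀| r ^ m)`, and Bernoulli's inequality turns this into
`|f (ω z)| ^ p ≤ 1 - (p / 2) (1 - |a₀|²) (1 - r ^ m) / (1 + r ^ m)`.
Averaging `f` over the rotations of the disk by the `N`-th roots of unity gives a self-map of the
disk with Taylor series `∑ a_{Nk} wᵏ`; the Schwarz–Pick bound for its derivative at `0` is
Wiener's inequality `|a_N| ≤ 1 - |a₀|²`, so the coefficient sum is at most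
`(1 - |a₀|²) r ^ (q + m) / (1 - r ^ q)`. Adding up, the left-hand side is at most
`1 + (1 - |a₀|²) Ψ₅(r) / 2`, and `Ψ₅ ≤ 0` on `[0, R]` because `Ψ₅(0) = -p < 0` and `Ψ₅` has no
zero in `(0, R)`.
-/

open Complex Metric Filter Asymptotics Topology ComplexConjugate

theorem hasFPowerSeriesOnBall_ofScalars_of_hasSum {g : ℂ → ℂ} {a : ℕ → ℂ}
    (hg : ∀ z ∈ ball (0 : ℂ) 1, HasSum (fun n ↦ a n * z ^ n) (g z)) :
    HasFPowerSeriesOnBall g (FormalMultilinearSeries.ofScalars ℂ a) 0 1 where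
  r_le := by
    refine ENNReal.le_of_forall_nnreal_lt fun r hr ↦ ?_
    have hr1 : (r : ℝ) < 1 := by exact_mod_cast hr
    have hmem : ((r : ℝ) : ℂ) ∈ ball (0 : ℂ) 1 := by simpa [abs_of_nonneg r.2] using hr1
    refine FormalMultilinearSeries.le_radius_of_tendsto _ (l := 0) ?_
    simpa [FormalMultilinearSeries.ofScalars_norm, abs_of_nonneg r.2]
      using (hg _ hmem).summable.tendsto_atTop_zero.norm
  r_pos := one_pos
  hasSum {y} hy := by
    simpa [FormalMultilinearSeries.ofScalars_apply_eq, mul_comm] using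
      hg y (by simpa [← ENNReal.ofReal_one, eball_ofReal] using hy)

theorem differentiableOn_ball_of_hasSum {g : ℂ → ℂ} {a : ℕ → ℂ}
    (hg : ∀ z ∈ ball (0 : ℂ) 1, HasSum (fun n ↦ a n * z ^ n) (g z)) :
    DifferentiableOn ℂ g (ball 0 1) := by
  simpa [← ENNReal.ofReal_one, eball_ofReal] using
    (hasFPowerSeriesOnBall_ofScalars_of_hasSum hg).differentiableOn

theorem apply_zero_eq_of_hasSum {g : ℂ → ℂ} {a : ℕ → ℂ}
    (hg : ∀ z ∈ ball (0 : ℂ) 1, HasSum (fun n ↦ a n * z ^ n) (g z)) : g 0 = a 0 := by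
  simpa using ((hasFPowerSeriesOnBall_ofScalars_of_hasSum hg).coeff_zero fun _ ↦ 1).symm

theorem norm_le_norm_pow_of_iteratedDeriv_eq_zero {ω : ℂ → ℂ} {m : ℕ}
    (hd : DifferentiableOn ℂ ω (ball 0 1)) (hb : ∀ z ∈ ball (0 : ℂ) 1, ‖ω z‖ ≤ 1)
    (h0 : ∀ k < m, iteratedDeriv k ω 0 = 0) {z : ℂ} (hz : z ∈ ball (0 : ℂ) 1) :
    ‖ω z‖ ≤ ‖z‖ ^ m := by
  cases m with
  | zero => simpa using hb z hz
  | succ n =>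
  have hω0 : ω 0 = 0 := by simpa using h0 0 n.succ_pos
  have ha : AnalyticAt ℂ ω 0 := hd.analyticAt (isOpen_ball.mem_nhds (mem_ball_self one_pos))
  obtain ⟨g, hg, hωg⟩ := (natCast_le_analyticOrderAt ha).mp
    ((natCast_le_analyticOrderAt_iff_iteratedDeriv_eq_zero ha).mpr h0)
  have hlittle : (ω · - ω 0) =o[𝓝 0] (fun w ↦ ‖w - 0‖ ^ n) := by
    have h1 : (fun w : ℂ ↦ w • g w) =o[𝓝 0] (fun _ ↦ (1 : ℝ)) := by
      rw [isLittleO_one_iff]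
      simpa using (continuousAt_id.fun_smul hg.continuousAt).tendsto
    have h2 : (fun w : ℂ ↦ w ^ n) =O[𝓝 0] (fun w ↦ ‖w - 0‖ ^ n) := by
      simpa using (isBigO_refl (fun w : ℂ ↦ w ^ n) (𝓝 0)).norm_right
    refine (h2.mul_isLittleO h1).congr' ?_ (by simp)
    filter_upwards [hωg] with w hw
    rw [hw, hω0, sub_zero, sub_zero, smul_eq_mul, smul_eq_mul, pow_succ, mul_assoc]
  have hmaps : Set.MapsTo ω (ball 0 1) (closedBall (ω 0) 1) := fun w hw ↦ by
    simpa [hω0] using hb w hw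
  simpa [hω0] using dist_le_mul_div_pow_of_mapsTo_ball_of_isLittleO hd hmaps hlittle hz

theorem normSq_one_sub_conj_mul_sub_normSq_sub (c w : ℂ) :
    normSq (1 - conj c * w) - normSq (w - c) = (1 - normSq c) * (1 - normSq w) := by
  simp only [normSq_apply, sub_re, sub_im, mul_re, mul_im, conj_re, conj_im, one_re, one_im]
  ring

theorem norm_sub_le_norm_one_sub_conj_mul {c w : ℂ} (hc : ‖c‖ ≤ 1) (hw : ‖w‖ ≤ 1) :
    ‖w - c‖ ≤ ‖1 - conj c * w‖ := by
  have hc' : normSq c ≤ 1 := by rw [← Complex.sq_norm]; exact pow_le_one₀ (norm_nonneg c) hc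
  have hw' : normSq w ≤ 1 := by rw [← Complex.sq_norm]; exact pow_le_one₀ (norm_nonneg w) hw
  rw [← sq_le_sq₀ (norm_nonneg _) (norm_nonneg _), Complex.sq_norm, Complex.sq_norm]
  nlinarith [normSq_one_sub_conj_mul_sub_normSq_sub c w]

theorem norm_le_div_of_norm_sub_le_mul {c w : ℂ} {t : ℝ} (ht0 : 0 ≤ t) (ht1 : t ≤ 1)
    (hc : ‖c‖ ≤ 1) (hw : ‖w‖ ≤ 1) (h : ‖w - c‖ ≤ t * ‖1 - conj c * w‖) :
    ‖w‖ ≤ (‖c‖ + t) / (1 + ‖c‖ * t) := by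
  set b := ‖c‖
  set s := ‖w‖
  set e := (c * conj w).re
  have hsq : normSq (w - c) ≤ t ^ 2 * normSq (1 - conj c * w) := by
    rw [← Complex.sq_norm, ← Complex.sq_norm, ← mul_pow]
    exact pow_le_pow_left₀ (norm_nonneg _) h 2
  have hnum : normSq (w - c) = s ^ 2 + b ^ 2 - 2 * e := by
    rw [normSq_sub, ← conj_re, map_mul, conj_conj, mul_comm (conj w), Complex.sq_norm,
      Complex.sq_norm]
  have hden : normSq (1 - conj c * w) = 1 + b ^ 2 * s ^ 2 - 2 * e := by
    rw [normSq_sub, map_one, normSq_mul, normSq_conj, Complex.sq_norm, Complex.sq_norm, one_mul,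
      map_mul, conj_conj]
  have he : e ≤ b * s := by
    simpa [b, s, e] using re_le_norm (c * conj w)
  have hb0 : 0 ≤ b := norm_nonneg c
  have hs0 : 0 ≤ s := norm_nonneg w
  rw [hnum, hden] at hsq
  -- a quadratic inequality in `s` with roots `(b + t) / (1 + b t)` and `(b - t) / (1 - b t)`
  have hquad : ((1 + b * t) * s - (b + t)) * ((1 - b * t) * s - (b - t)) ≤ 0 := by
    nlinarith [mul_le_mul_of_nonneg_right he (by nlinarith : (0 : ℝ) ≤ 1 - t ^ 2)]
  rw [le_div_iff₀ (by positivity)]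
  nlinarith [mul_nonneg ht0 (by nlinarith [mul_le_one₀ hc hs0 hw] : (0 : ℝ) ≤ 1 - b * s)]

theorem norm_sub_apply_zero_le_mul_norm_one_sub_conj_mul {F : ℂ → ℂ}
    (hd : DifferentiableOn ℂ F (ball 0 1)) (hb : ∀ z ∈ ball (0 : ℂ) 1, ‖F z‖ ≤ 1)
    {z : ℂ} (hz : z ∈ ball (0 : ℂ) 1) :
    ‖F z - F 0‖ ≤ ‖z‖ * ‖1 - conj (F 0) * F z‖ := by
  have h0 : (0 : ℂ) ∈ ball (0 : ℂ) 1 := mem_ball_self one_pos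
  rcases (hb 0 h0).eq_or_lt with hF0 | hF0
  · have hconst : F z = F 0 :=
      eqOn_of_isPreconnected_of_isMaxOn_norm (convex_ball (0 : ℂ) 1).isPreconnected
        isOpen_ball hd h0 (fun w hw ↦ by simpa [hF0] using hb w hw) hz
    simpa [hconst] using by positivity
  have hden : ∀ w ∈ ball (0 : ℂ) 1, 1 - conj (F 0) * F w ≠ 0 := fun w hw ↦ by
    refine sub_ne_zero.mpr fun h ↦ ?_
    have := congrArg norm h
    rw [norm_one, norm_mul, norm_conj] at this
    nlinarith [mul_le_of_le_one_right (norm_nonneg (F 0)) (hb w hw)]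
  set G : ℂ → ℂ := fun w ↦ (F w - F 0) / (1 - conj (F 0) * F w)
  have hGd : DifferentiableOn ℂ G (ball 0 1) :=
    (hd.sub_const _).div ((differentiableOn_const _).sub (hd.const_mul _)) hden
  have hGmaps : Set.MapsTo G (ball 0 1) (closedBall 0 1) := fun w hw ↦ by
    rw [mem_closedBall_zero_iff, norm_div, div_le_one (norm_pos_iff.mpr (hden w hw))]
    exact norm_sub_le_norm_one_sub_conj_mul (hb 0 h0) (hb w hw)
  have hG := norm_le_norm_of_mapsTo_ball hGd hGmaps (by simp [G]) (mem_ball_zero_iff.mp hz)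
  rwa [norm_div, div_le_iff₀ (norm_pos_iff.mpr (hden z hz))] at hG

theorem norm_deriv_le_one_sub_sq {F : ℂ → ℂ}
    (hd : DifferentiableOn ℂ F (ball 0 1)) (hb : ∀ z ∈ ball (0 : ℂ) 1, ‖F z‖ ≤ 1) :
    ‖deriv F 0‖ ≤ 1 - ‖F 0‖ ^ 2 := by
  have hball : ball (0 : ℂ) 1 ∈ 𝓝 0 := ball_mem_nhds 0 one_pos
  have hdiff : DifferentiableAt ℂ F 0 := hd.differentiableAt hball
  have hslope : Tendsto (fun z ↦ ‖dslope F 0 z‖) (𝓝[≠] 0) (𝓝 ‖deriv F 0‖) := by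
    simpa using ((continuousAt_dslope_same.mpr hdiff).tendsto.mono_left nhdsWithin_le_nhds).norm
  have hbound : Tendsto (fun z ↦ ‖1 - conj (F 0) * F z‖) (𝓝[≠] 0) (𝓝 (1 - ‖F 0‖ ^ 2)) := by
    have hF0 : ‖F 0‖ ≤ 1 := hb 0 (mem_ball_self one_pos)
    have hlim : ‖1 - conj (F 0) * F 0‖ = 1 - ‖F 0‖ ^ 2 := by
      rw [conj_mul', ← ofReal_pow, ← ofReal_one, ← ofReal_sub, norm_real, Real.norm_of_nonneg]
      nlinarith [norm_nonneg (F 0)]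
    rw [← hlim]
    exact (continuousAt_const.sub (continuousAt_const.mul hdiff.continuousAt)).norm.tendsto
      |>.mono_left nhdsWithin_le_nhds
  refine le_of_tendsto_of_tendsto hslope hbound ?_
  filter_upwards [self_mem_nhdsWithin, mem_nhdsWithin_of_mem_nhds hball] with z hz0 hz
  rw [dslope_of_ne _ hz0, slope_def_field, norm_div, sub_zero, div_le_iff₀ (norm_pos_iff.mpr hz0),
    mul_comm]
  exact norm_sub_apply_zero_le_mul_norm_one_sub_conj_mul hd hb hz

theorem IsPrimitiveRoot.geom_sum_pow_eq_ite {K : Type*} [Field K] {ζ : K} {N : ℕ}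
    (hζ : IsPrimitiveRoot ζ N) (n : ℕ) :
    ∑ j ∈ Finset.range N, (ζ ^ n) ^ j = if N ∣ n then (N : K) else 0 := by
  split_ifs with h
  · obtain ⟨k, rfl⟩ := h
    simp [pow_mul, hζ.pow_eq_one]
  · have hne : ζ ^ n ≠ 1 := fun h' ↦ h (hζ.dvd_of_pow_eq_one n h')
    rw [geom_sum_eq hne, ← pow_mul, mul_comm, pow_mul, hζ.pow_eq_one, one_pow, sub_self, zero_div]

theorem hasSum_coeff_mul_mul_pow_of_isPrimitiveRoot {a : ℕ → ℂ} {g : ℂ → ℂ} {N : ℕ}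
    (hN : 0 < N) {ζ z : ℂ} (hζ : IsPrimitiveRoot ζ N)
    (hg : ∀ j, HasSum (fun n ↦ a n * (ζ ^ j * z) ^ n) (g (ζ ^ j * z))) :
    HasSum (fun k ↦ a (N * k) * (z ^ N) ^ k) ((N : ℂ)⁻¹ * ∑ j ∈ Finset.range N, g (ζ ^ j * z)) := by
  have hrot : HasSum (fun n ↦ a n * z ^ n * if N ∣ n then (N : ℂ) else 0)
      (∑ j ∈ Finset.range N, g (ζ ^ j * z)) := by
    convert hasSum_sum fun j (_ : j ∈ Finset.range N) ↦ hg j using 2 with n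
    rw [← hζ.geom_sum_pow_eq_ite n, Finset.mul_sum]
    refine Finset.sum_congr rfl fun j _ ↦ ?_
    ring
  have hinj : Function.Injective (N * ·) := mul_right_injective₀ hN.ne'
  have hsupp : ∀ n ∉ Set.range (N * ·), (a n * z ^ n * if N ∣ n then (N : ℂ) else 0) = 0 :=
    fun n hn ↦ by rw [if_neg fun ⟨k, hk⟩ ↦ hn ⟨k, hk.symm⟩, mul_zero]
  have hN' : (N : ℂ) ≠ 0 := by exact_mod_cast hN.ne'
  rw [inv_mul_eq_div]
  refine (((hinj.hasSum_iff hsupp).mpr hrot).div_const (N : ℂ)).congr_fun fun k ↦ ?_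
  simp [pow_mul, hN']

theorem exists_hasSum_coeff_mul_mul_pow_and_norm_le_one {g : ℂ → ℂ} {a : ℕ → ℂ}
    (hg : ∀ z ∈ ball (0 : ℂ) 1, HasSum (fun n ↦ a n * z ^ n) (g z))
    (hgb : ∀ z ∈ ball (0 : ℂ) 1, ‖g z‖ ≤ 1) {N : ℕ} (hN : 0 < N) {w : ℂ}
    (hw : w ∈ ball (0 : ℂ) 1) : ∃ S, HasSum (fun k ↦ a (N * k) * w ^ k) S ∧ ‖S‖ ≤ 1 := by
  obtain ⟨z, rfl⟩ := IsAlgClosed.exists_pow_nat_eq w hN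
  obtain ⟨ζ, hζ⟩ : ∃ ζ : ℂ, IsPrimitiveRoot ζ N := ⟨_, isPrimitiveRoot_exp N hN.ne'⟩
  have hrot : ∀ j, ζ ^ j * z ∈ ball (0 : ℂ) 1 := fun j ↦ by
    rw [mem_ball_zero_iff, norm_mul, norm_pow, hζ.norm'_eq_one hN.ne', one_pow, one_mul]
    rw [mem_ball_zero_iff, norm_pow] at hw
    exact (pow_lt_one_iff_of_nonneg (norm_nonneg z) hN.ne').mp hw
  refine ⟨_, hasSum_coeff_mul_mul_pow_of_isPrimitiveRoot hN hζ fun j ↦ hg _ (hrot j), ?_⟩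
  have hN' : (0 : ℝ) < N := by exact_mod_cast hN
  calc ‖(N : ℂ)⁻¹ * ∑ j ∈ Finset.range N, g (ζ ^ j * z)‖
      ≤ (N : ℝ)⁻¹ * ∑ j ∈ Finset.range N, ‖g (ζ ^ j * z)‖ := by
        rw [norm_mul, norm_inv, norm_natCast]
        gcongr
        exact norm_sum_le _ _
    _ ≤ (N : ℝ)⁻¹ * ∑ j ∈ Finset.range N, 1 := by
        gcongr with j
        exact hgb _ (hrot j)
    _ = 1 := by simp [hN'.ne']

theorem norm_coeff_le_one_sub_sq {g : ℂ → ℂ} {a : ℕ → ℂ}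
    (hg : ∀ z ∈ ball (0 : ℂ) 1, HasSum (fun n ↦ a n * z ^ n) (g z))
    (hgb : ∀ z ∈ ball (0 : ℂ) 1, ‖g z‖ ≤ 1) {N : ℕ} (hN : 0 < N) :
    ‖a N‖ ≤ 1 - ‖a 0‖ ^ 2 := by
  choose! F hF hFb using fun w (hw : w ∈ ball (0 : ℂ) 1) ↦
    exists_hasSum_coeff_mul_mul_pow_and_norm_le_one hg hgb hN hw
  have hFs := hasFPowerSeriesOnBall_ofScalars_of_hasSum hF
  have hderiv : deriv F 0 = a N := by
    simpa [FormalMultilinearSeries.ofScalars_apply_eq] using hFs.hasFPowerSeriesAt.deriv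
  simpa [hderiv, apply_zero_eq_of_hasSum hF] using
    norm_deriv_le_one_sub_sq (differentiableOn_ball_of_hasSum hF) hFb

theorem rpow_le_one_sub_mul_one_sub_sq {y p : ℝ} (hy0 : 0 ≤ y) (hp0 : 0 ≤ p)
    (hp2 : p ≤ 2) : y ^ p ≤ 1 - p / 2 * (1 - y ^ 2) := by
  have hy : y ^ p = (1 + (y ^ 2 - 1)) ^ (p / 2) := by
    rw [add_sub_cancel, ← Real.rpow_natCast, ← Real.rpow_mul hy0]
    norm_num [mul_div_cancel₀]
  rw [hy]
  linarith [rpow_one_add_le_one_add_mul_self (by nlinarith : (-1 : ℝ) ≤ y ^ 2 - 1)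
    (by linarith : 0 ≤ p / 2) (by linarith : p / 2 ≤ 1)]

theorem rpow_le_of_le_div_one_add_mul {x b u p : ℝ} (hx0 : 0 ≤ x) (hb0 : 0 ≤ b) (hb1 : b ≤ 1)
    (hu0 : 0 ≤ u) (hu1 : u ≤ 1) (hp0 : 0 ≤ p) (hp2 : p ≤ 2) (hx : x ≤ (b + u) / (1 + b * u)) :
    x ^ p ≤ 1 - p / 2 * ((1 - b ^ 2) * ((1 - u) / (1 + u))) := by
  have hbu : 0 < 1 + b * u := by positivity
  set y := (b + u) / (1 + b * u)
  have hy2 : (1 - b ^ 2) * ((1 - u) / (1 + u)) ≤ 1 - y ^ 2 := by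
    have : 1 - y ^ 2 = (1 - b ^ 2) * (1 - u ^ 2) / (1 + b * u) ^ 2 := by
      simp only [y]; field_simp; ring
    rw [this, mul_div_assoc', div_le_div_iff₀ (by linarith) (by positivity)]
    have : 0 ≤ (1 - b ^ 2) * (1 - u) := mul_nonneg (by nlinarith) (by linarith)
    nlinarith [mul_nonneg this (mul_nonneg hu0 (by nlinarith : 0 ≤ (1 - b) * (2 + u + b * u)))]
  calc x ^ p ≤ y ^ p := Real.rpow_le_rpow hx0 hx hp0
    _ ≤ 1 - p / 2 * (1 - y ^ 2) := rpow_le_one_sub_mul_one_sub_sq (hx0.trans hx) hp0 hp2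
    _ ≤ _ := by gcongr

theorem tsum_norm_mul_pow_le {a : ℕ → ℂ} {C r : ℝ} (hC : ∀ n, 0 < n → ‖a n‖ ≤ C)
    (hr0 : 0 ≤ r) (hr1 : r < 1) {q : ℕ} (hq : 0 < q) (m : ℕ) :
    ∑' k : ℕ, ‖a (q * (k + 1) + m)‖ * r ^ (q * (k + 1) + m) ≤ C * (r ^ (q + m) / (1 - r ^ q)) := by
  have hrq0 : 0 ≤ r ^ q := pow_nonneg hr0 q
  have hrq1 : r ^ q < 1 := pow_lt_one₀ hr0 hr1 hq.ne'
  have hpow : ∀ k : ℕ, r ^ (q * (k + 1) + m) = r ^ (q + m) * (r ^ q) ^ k := fun k ↦ by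
    rw [← pow_mul, ← pow_add]; ring_nf
  have hterm : ∀ k : ℕ, ‖a (q * (k + 1) + m)‖ * r ^ (q * (k + 1) + m)
      ≤ C * r ^ (q + m) * (r ^ q) ^ k := fun k ↦ by
    rw [hpow, ← mul_assoc]
    gcongr
    exact hC _ (by positivity)
  have hgeom : Summable fun k : ℕ ↦ C * r ^ (q + m) * (r ^ q) ^ k :=
    (summable_geometric_of_lt_one hrq0 hrq1).mul_left _
  calc ∑' k : ℕ, ‖a (q * (k + 1) + m)‖ * r ^ (q * (k + 1) + m)
      ≤ ∑' k : ℕ, C * r ^ (q + m) * (r ^ q) ^ k :=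
        (hgeom.of_nonneg_of_le (fun k ↦ by positivity) hterm).tsum_le_tsum hterm hgeom
    _ = C * (r ^ (q + m) / (1 - r ^ q)) := by
        rw [tsum_mul_left, tsum_geometric_of_lt_one hrq0 hrq1]; ring

theorem nonpos_of_le_of_le_zeros {Ψ : ℝ → ℝ} {R r : ℝ} (hr0 : 0 ≤ r) (hr1 : r ≤ 1) (hrR : r ≤ R)
    (hcont : ContinuousOn Ψ (Set.Icc 0 r)) (h0 : Ψ 0 < 0)
    (hmin : ∀ s, 0 < s → s ≤ 1 → Ψ s = 0 → R ≤ s) : Ψ r ≤ 0 := by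
  by_contra! hpos
  obtain ⟨s, hs, hΨs⟩ := intermediate_value_Icc hr0 hcont ⟨h0.le, hpos.le⟩
  have hs0 : 0 < s := hs.1.lt_of_ne (by rintro rfl; exact h0.ne hΨs)
  have : s = r := le_antisymm hs.2 (hrR.trans (hmin s hs0 (hs.2.trans hr1) hΨs))
  exact hpos.ne' (this ▸ hΨs)

noncomputable def psi₅ (lam p : ℝ) (q m : ℕ) (r : ℝ) : ℝ :=
  2 * lam * (r ^ (q + m) / (1 - r ^ q)) - p * ((1 - r ^ m) / (1 + r ^ m))

theorem psi₅_zero (lam p : ℝ) (q : ℕ) {m : ℕ} (hm : 0 < m) : psi₅ lam p q m 0 = -p := by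
  simp [psi₅, hm.ne']

theorem continuousOn_psi₅ (lam p : ℝ) {q : ℕ} (hq : 0 < q) (m : ℕ) {r : ℝ} (hr1 : r < 1) :
    ContinuousOn (psi₅ lam p q m) (Set.Icc 0 r) := by
  refine ContinuousOn.sub (continuousOn_const.mul (ContinuousOn.div (by fun_prop) (by fun_prop) ?_))
    (continuousOn_const.mul (ContinuousOn.div (by fun_prop) (by fun_prop) ?_))
  · exact fun s hs ↦ (sub_pos.mpr (pow_lt_one₀ hs.1 (hs.2.trans_lt hr1) hq.ne')).ne'
  · exact fun s hs ↦ by have := pow_nonneg hs.1 m; positivity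

theorem stmt_10_general
    (p : ℝ) (hp0 : 0 < p) (hp2 : p ≤ 2)
    (m q : ℕ) (hq : 2 ≤ q) (hm : 0 < m)
    (lam : ℝ) (hlam : 0 < lam)
    -- Ψ₅ and its minimal positive root R in [0,1]
    (Ψ : ℝ → ℝ)
    (hΨ : ∀ r : ℝ, Ψ r = 2 * lam * (r ^ (q + m) / (1 - r ^ q))
            - p * ((1 - r ^ m) / (1 + r ^ m)))
    (R : ℝ)
    (hmin : ∀ r : ℝ, 0 < r → r ≤ 1 → Ψ r = 0 → R ≤ r)
    -- f ∈ ℬ with Taylor coefficients a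
    (f : ℂ → ℂ) (a : ℕ → ℂ)
    (hf : ∀ z ∈ Metric.ball (0:ℂ) 1, HasSum (fun n => a n * z ^ n) (f z))
    (hfb : ∀ z ∈ Metric.ball (0:ℂ) 1, ‖f z‖ ≤ 1)
    -- ω ∈ ℬ_m
    (ω : ℂ → ℂ)
    (hωd : DifferentiableOn ℂ ω (Metric.ball (0:ℂ) 1))
    (hωb : ∀ z ∈ Metric.ball (0:ℂ) 1, ‖ω z‖ ≤ 1)
    (hω0 : ∀ k < m, iteratedDeriv k ω 0 = 0) :
    ∀ (z : ℂ) (r : ℝ), z ∈ Metric.ball (0:ℂ) 1 → ‖z‖ = r → r ≤ R →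
      ‖f (ω z)‖ ^ p
        + lam * ∑' k : ℕ, ‖a (q * (k + 1) + m)‖ * r ^ (q * (k + 1) + m)
      ≤ 1 := by
  rintro z _ hz rfl hzR
  have hz1 : ‖z‖ < 1 := mem_ball_zero_iff.mp hz
  have hq0 : 0 < q := by omega
  have hf0 : f 0 = a 0 := apply_zero_eq_of_hasSum hf
  have hb1 : ‖f 0‖ ≤ 1 := hfb 0 (mem_ball_self one_pos)
  have hu1 : ‖z‖ ^ m < 1 := pow_lt_one₀ (norm_nonneg z) hz1 hm.ne'
  have hωz : ‖ω z‖ ≤ ‖z‖ ^ m := norm_le_norm_pow_of_iteratedDeriv_eq_zero hωd hωb hω0 hz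
  have hωz1 : ω z ∈ ball (0 : ℂ) 1 := mem_ball_zero_iff.mpr (hωz.trans_lt hu1)
  have hpick : ‖f (ω z)‖ ≤ (‖f 0‖ + ‖z‖ ^ m) / (1 + ‖f 0‖ * ‖z‖ ^ m) :=
    norm_le_div_of_norm_sub_le_mul (by positivity) hu1.le hb1 (hfb _ hωz1)
      ((norm_sub_apply_zero_le_mul_norm_one_sub_conj_mul (differentiableOn_ball_of_hasSum hf)
        hfb hωz1).trans (by gcongr))
  rw [hf0] at hb1 hpick
  have hmod := rpow_le_of_le_div_one_add_mul (norm_nonneg _) (norm_nonneg _) hb1 (by positivity)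
    hu1.le hp0.le hp2 hpick
  have hsum := tsum_norm_mul_pow_le (fun n hn ↦ norm_coeff_le_one_sub_sq hf hfb hn)
    (norm_nonneg z) hz1 hq0 m
  have hΨ₅ : Ψ = psi₅ lam p q m := funext hΨ
  subst hΨ₅
  have hΨz : psi₅ lam p q m ‖z‖ ≤ 0 := nonpos_of_le_of_le_zeros (norm_nonneg z) hz1.le hzR
    (continuousOn_psi₅ lam p hq0 m hz1) (by rw [psi₅_zero lam p q hm]; linarith) hmin
  have hb2 : 0 ≤ 1 - ‖a 0‖ ^ 2 := by nlinarith [norm_nonneg (a 0)]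
  calc ‖f (ω z)‖ ^ p + lam * ∑' k : ℕ, ‖a (q * (k + 1) + m)‖ * ‖z‖ ^ (q * (k + 1) + m)
      ≤ 1 - p / 2 * ((1 - ‖a 0‖ ^ 2) * ((1 - ‖z‖ ^ m) / (1 + ‖z‖ ^ m)))
        + lam * ((1 - ‖a 0‖ ^ 2) * (‖z‖ ^ (q + m) / (1 - ‖z‖ ^ q))) := by gcongr
    _ = 1 + (1 - ‖a 0‖ ^ 2) / 2 * psi₅ lam p q m ‖z‖ := by rw [psi₅]; ring
    _ ≤ 1 := by linarith [mul_nonpos_of_nonneg_of_nonpos (div_nonneg hb2 two_pos.le) hΨz]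

/-- Theorem 6 of the paper, positive part.
Let `Ψ₅(r) = 2λ r^{q+m}/(1−r^q) − p(1−r^m)/(1+r^m)` and let `R` be its minimal positive
root in `[0,1]`. Then for `f ∈ ℬ`, `ω ∈ ℬ_m` and `|z| = r ≤ R`:
`|f(ω(z))|^p + λ Σ_{k≥1} |a_{qk+m}| r^{qk+m} ≤ 1`. -/
theorem stmt_10
    (p : ℝ) (hp0 : 0 < p) (hp2 : p ≤ 2)
    (m q : ℕ) (hq : 2 ≤ q) (hm : 0 < m) (hmq : m < q)
    (lam : ℝ) (hlam : 0 < lam)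
    -- Ψ₅ and its minimal positive root R in [0,1]
    (Ψ : ℝ → ℝ)
    (hΨ : ∀ r : ℝ, Ψ r = 2 * lam * (r ^ (q + m) / (1 - r ^ q))
            - p * ((1 - r ^ m) / (1 + r ^ m)))
    (R : ℝ) (hRpos : 0 < R) (hR1 : R ≤ 1) (hroot : Ψ R = 0)
    (hmin : ∀ r : ℝ, 0 < r → r ≤ 1 → Ψ r = 0 → R ≤ r)
    -- f ∈ ℬ with Taylor coefficients a
    (f : ℂ → ℂ) (a : ℕ → ℂ)
    (hf : ∀ z ∈ Metric.ball (0:ℂ) 1, HasSum (fun n => a n * z ^ n) (f z))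
    (hfb : ∀ z ∈ Metric.ball (0:ℂ) 1, ‖f z‖ ≤ 1)
    -- ω ∈ ℬ_m
    (ω : ℂ → ℂ)
    (hωd : DifferentiableOn ℂ ω (Metric.ball (0:ℂ) 1))
    (hωb : ∀ z ∈ Metric.ball (0:ℂ) 1, ‖ω z‖ ≤ 1)
    (hω0 : ∀ k < m, iteratedDeriv k ω 0 = 0)
    (hωm : iteratedDeriv m ω 0 ≠ 0) :
    ∀ (z : ℂ) (r : ℝ), z ∈ Metric.ball (0:ℂ) 1 → ‖z‖ = r → r ≤ R →
      ‖f (ω z)‖ ^ p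
        + lam * ∑' k : ℕ, ‖a (q * (k + 1) + m)‖ * r ^ (q * (k + 1) + m)
      ≤ 1 :=
  stmt_10_general p hp0 hp2 m q hq hm lam hlam Ψ hΨ R hmin f a hf hfb ω hωd hωb hω0
end

section
/- Let m ∈ ℕ and p ∈ (0,2]. Let φ₀, N : [0,1) → ℝ be nonnegative continuous functions, and for r ∈ [0,1) and a ∈ [0,1] set D_{p,m}(a) = [((a + r^m)/(1 + a r^m))^p − 1]·φ₀(r) + (1 − a²)·N(r). Set Ψ_{p,m}(r) = p·((1 − r^m)/(1 + r^m))·φ₀(r) − 2N(r), and let R be the minimal root of Ψ_{p,m}(r) = 0 in (0,1). If Ψ_{p,m}(r) ≥ 0 for all r ∈ [0,R], then D_{p,m}(a) ≤ 0 for every a ∈ [0,1] and every r ∈ [0,R]. -/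
/-! With `t = r ^ m` and `x = (a + t) / (1 + a t)`, Bernoulli's inequality applied to
`x ^ p = (1 + (x ^ 2 - 1)) ^ (p / 2)` gives `x ^ p - 1 ≤ (p / 2) (x ^ 2 - 1)`, while
`1 - x ^ 2 = (1 - a ^ 2)(1 - t ^ 2) / (1 + a t) ^ 2 ≥ (1 - a ^ 2)(1 - t) / (1 + t)`.
Hence `D_{p,m}(a) ≤ (1 - a ^ 2) (N r - (p / 2) ((1 - t) / (1 + t)) φ₀ r)`, and the last factor
is `-Ψ_{p,m}(r) / 2 ≤ 0`. -/

theorem rpow_le_one_add_half_mul_sq_sub_one {x p : ℝ} (hx : 0 ≤ x) (hp0 : 0 ≤ p) (hp2 : p ≤ 2) :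
    x ^ p ≤ 1 + p / 2 * (x ^ 2 - 1) := by
  have hsq : x ^ p = (1 + (x ^ 2 - 1)) ^ (p / 2) := by
    rw [add_sub_cancel, ← Real.rpow_two, ← Real.rpow_mul hx]
    ring_nf
  rw [hsq]
  exact rpow_one_add_le_one_add_mul_self (by nlinarith) (by linarith) (by linarith)

theorem one_sub_sq_div_one_add_mul_sq {a t : ℝ} (h : 1 + a * t ≠ 0) :
    1 - ((a + t) / (1 + a * t)) ^ 2 = (1 - a ^ 2) * (1 - t ^ 2) / (1 + a * t) ^ 2 := by
  field_simp
  ring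

theorem one_sub_sq_mul_le_one_sub_sq_div_one_add_mul {a t : ℝ}
    (ha0 : 0 ≤ a) (ha1 : a ≤ 1) (ht0 : 0 ≤ t) (ht1 : t ≤ 1) :
    (1 - a ^ 2) * ((1 - t) / (1 + t)) ≤ 1 - ((a + t) / (1 + a * t)) ^ 2 := by
  have hat : 0 < 1 + a * t := by positivity
  rw [one_sub_sq_div_one_add_mul_sq hat.ne', ← mul_div_assoc,
    div_le_div_iff₀ (by positivity) (by positivity)]
  have hsq : (1 + a * t) ^ 2 ≤ (1 + t) ^ 2 := by
    gcongr
    nlinarith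
  have hfac : 0 ≤ (1 - a ^ 2) * (1 - t) := mul_nonneg (by nlinarith) (by linarith)
  calc (1 - a ^ 2) * (1 - t) * (1 + a * t) ^ 2
      ≤ (1 - a ^ 2) * (1 - t) * (1 + t) ^ 2 := mul_le_mul_of_nonneg_left hsq hfac
    _ = (1 - a ^ 2) * (1 - t ^ 2) * (1 + t) := by ring

theorem rpow_sub_one_mul_add_one_sub_sq_mul_nonpos {a t p φ n : ℝ}
    (ha0 : 0 ≤ a) (ha1 : a ≤ 1) (ht0 : 0 ≤ t) (ht1 : t ≤ 1) (hp0 : 0 ≤ p) (hp2 : p ≤ 2)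
    (hφ : 0 ≤ φ) (hn : 2 * n ≤ p * ((1 - t) / (1 + t)) * φ) :
    (((a + t) / (1 + a * t)) ^ p - 1) * φ + (1 - a ^ 2) * n ≤ 0 := by
  set x := (a + t) / (1 + a * t)
  have hbern : x ^ p - 1 ≤ p / 2 * (x ^ 2 - 1) := by
    linarith [rpow_le_one_add_half_mul_sq_sub_one (by positivity : 0 ≤ x) hp0 hp2]
  have hx : (1 - a ^ 2) * ((1 - t) / (1 + t)) ≤ 1 - x ^ 2 :=
    one_sub_sq_mul_le_one_sub_sq_div_one_add_mul ha0 ha1 ht0 ht1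
  have ha : 0 ≤ 1 - a ^ 2 := by nlinarith
  calc (x ^ p - 1) * φ + (1 - a ^ 2) * n
      ≤ p / 2 * (x ^ 2 - 1) * φ + (1 - a ^ 2) * (p / 2 * ((1 - t) / (1 + t)) * φ) := by
        gcongr
        linarith
    _ = p / 2 * ((1 - a ^ 2) * ((1 - t) / (1 + t)) - (1 - x ^ 2)) * φ := by ring
    _ ≤ 0 := by
        apply mul_nonpos_of_nonpos_of_nonneg _ hφ
        exact mul_nonpos_of_nonneg_of_nonpos (by linarith) (by linarith)

theorem stmt_12_general
    (m : ℕ) (p : ℝ) (hp0 : 0 < p) (hp2 : p ≤ 2)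
    (φ₀ N : ℝ → ℝ)
    (hφ₀nn : ∀ r ∈ Set.Ico (0:ℝ) 1, 0 ≤ φ₀ r)
    (Ψ : ℝ → ℝ)
    (hΨ : ∀ r : ℝ, Ψ r = p * ((1 - r ^ m) / (1 + r ^ m)) * φ₀ r - 2 * N r)
    (R : ℝ) (hR : R ∈ Set.Ioo (0:ℝ) 1)
    (hΨnn : ∀ r ∈ Set.Icc (0:ℝ) R, 0 ≤ Ψ r) :
    ∀ a ∈ Set.Icc (0:ℝ) 1, ∀ r ∈ Set.Icc (0:ℝ) R,
      (((a + r ^ m) / (1 + a * r ^ m)) ^ p - 1) * φ₀ r + (1 - a ^ 2) * N r ≤ 0 := by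
  rintro a ⟨ha0, ha1⟩ r hr
  have hr1 : r ≤ 1 := hr.2.trans hR.2.le
  have hΨr := hΨnn r hr
  rw [hΨ] at hΨr
  exact rpow_sub_one_mul_add_one_sub_sq_mul_nonpos ha0 ha1 (pow_nonneg hr.1 m)
    (pow_le_one₀ hr.1 hr1) hp0.le hp2 (hφ₀nn r ⟨hr.1, hr.2.trans_lt hR.2⟩) (by linarith)

/-- Lemma 3 of the paper.
For nonnegative continuous `φ₀, N` on `[0,1)`, set
`D_{p,m}(a) = [((a+r^m)/(1+ar^m))^p − 1]·φ₀(r) + (1−a²)·N(r)` and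
`Ψ_{p,m}(r) = p((1−r^m)/(1+r^m))φ₀(r) − 2N(r)`, with `R` the minimal root of
`Ψ_{p,m} = 0` in `(0,1)`. If `Ψ_{p,m} ≥ 0` on `[0,R]` then `D_{p,m}(a) ≤ 0`
for all `a ∈ [0,1]` and `r ∈ [0,R]`. -/
theorem stmt_12
    (m : ℕ) (hm : 1 ≤ m) (p : ℝ) (hp0 : 0 < p) (hp2 : p ≤ 2)
    (φ₀ N : ℝ → ℝ)
    (hφ₀c : ContinuousOn φ₀ (Set.Ico (0:ℝ) 1))
    (hφ₀nn : ∀ r ∈ Set.Ico (0:ℝ) 1, 0 ≤ φ₀ r)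
    (hNc : ContinuousOn N (Set.Ico (0:ℝ) 1))
    (hNnn : ∀ r ∈ Set.Ico (0:ℝ) 1, 0 ≤ N r)
    (Ψ : ℝ → ℝ)
    (hΨ : ∀ r : ℝ, Ψ r = p * ((1 - r ^ m) / (1 + r ^ m)) * φ₀ r - 2 * N r)
    (R : ℝ) (hR : R ∈ Set.Ioo (0:ℝ) 1) (hroot : Ψ R = 0)
    (hmin : ∀ r ∈ Set.Ioo (0:ℝ) 1, Ψ r = 0 → R ≤ r)
    (hΨnn : ∀ r ∈ Set.Icc (0:ℝ) R, 0 ≤ Ψ r) :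
    ∀ a ∈ Set.Icc (0:ℝ) 1, ∀ r ∈ Set.Icc (0:ℝ) R,
      (((a + r ^ m) / (1 + a * r ^ m)) ^ p - 1) * φ₀ r + (1 - a ^ 2) * N r ≤ 0 :=
  stmt_12_general m p hp0 hp2 φ₀ N hφ₀nn Ψ hΨ R hR hΨnn
end

section
/- Let f(z) = Σ_{n=1}^∞ a_n z^n be a Schwarz function (analytic on 𝔻, |f(z)| ≤ 1, f(0) = 0). Let m ∈ ℕ and let ω : 𝔻 → ℂ be analytic with |ω(z)| ≤ 1 and ω(0) = ω'(0) = ⋯ = ω^{(m−1)}(0) = 0. Then for every z ∈ 𝔻 with |z| = r < 1, one has |f′(ω(z)) − a₁| ≤ (1 − |a₁|²)·r^m(2 − r^m)/(1 − r^m)², where f′ is the complex derivative of f. -/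
/-!
Write `f(z) = z h(z)` with `h = dslope f 0`; by the Schwarz lemma `h` maps the disk into the closed
disk, `h(0) = a₁`, and `f'(w) - a₁ = (h(w) - h(0)) + w h'(w)`. If `h` is a unimodular constant,
both sides vanish. Otherwise `h` maps the disk into itself, and the two forms of the Schwarz–Pick
lemma, `|h(w) - a₁| ≤ |w| |1 - ā₁ h(w)|` and `|h'(w)| (1 - |w|²) ≤ 1 - |h(w)|²`, combine to
`|f'(w) - a₁| ≤ (1 - |a₁|²) s(2 - s)/(1 - s)²` for `|w| ≤ s < 1`. Finally `|ω(z)| ≤ |z|^m` is the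
Schwarz lemma for a zero of order `m`.
-/

open Metric Set Filter Topology Asymptotics
open scoped ComplexConjugate NNReal

lemma add_mul_le_mul_two_sub_div_sq {K ρ s t D : ℝ} (hK : 0 ≤ K) (hρ : 0 ≤ ρ) (hρs : ρ ≤ s)
    (hs : s < 1) (ht : 0 ≤ t) (hD : 0 ≤ D) (ht' : t * (1 - ρ) ≤ ρ * K)
    (hD' : D * (1 - ρ ^ 2) ≤ K + 2 * t) :
    t + ρ * D ≤ K * (s * (2 - s) / (1 - s) ^ 2) := by
  have ht1 : t * (1 - s) ≤ s * K := by nlinarith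
  have hD1 : D * (1 - s) ^ 2 ≤ K := by
    -- `D (1 - ρ)² (1 + ρ) ≤ (K + 2t)(1 - ρ) ≤ K (1 + ρ)`
    have : D * (1 - ρ) ^ 2 * (1 + ρ) ≤ K * (1 + ρ) := by nlinarith
    have hρD : D * (1 - ρ) ^ 2 ≤ K := le_of_mul_le_mul_right this (by linarith)
    nlinarith [mul_le_mul_of_nonneg_left (pow_le_pow_left₀ (by linarith : 0 ≤ 1 - s)
      (by linarith : 1 - s ≤ 1 - ρ) 2) hD]
  rw [mul_div_assoc', le_div_iff₀ (by nlinarith)]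
  nlinarith [mul_le_mul_of_nonneg_left hρs (mul_nonneg hD (sq_nonneg (1 - s)))]

namespace Complex

noncomputable def diskMobius (c z : ℂ) : ℂ := (z - c) / (1 - conj c * z)

variable {c z : ℂ}

lemma one_sub_conj_mul_ne_zero (hc : ‖c‖ < 1) (hz : ‖z‖ ≤ 1) : 1 - conj c * z ≠ 0 := by
  intro h
  have : ‖conj c * z‖ < 1 := by
    rw [norm_mul, norm_conj]
    nlinarith [norm_nonneg c, norm_nonneg z]
  rw [← sub_eq_zero.mp h, norm_one] at this
  exact this.false

lemma normSq_one_sub_conj_mul_sub_normSq_sub (c z : ℂ) :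
    normSq (1 - conj c * z) - normSq (z - c) = (1 - normSq c) * (1 - normSq z) := by
  simp only [normSq_apply, sub_re, sub_im, mul_re, mul_im, conj_re, conj_im, one_re, one_im]
  ring

lemma norm_diskMobius_lt_one (hc : ‖c‖ < 1) (hz : ‖z‖ < 1) : ‖diskMobius c z‖ < 1 := by
  have hden := one_sub_conj_mul_ne_zero hc hz.le
  rw [diskMobius, norm_div, div_lt_one (norm_pos_iff.mpr hden), ← sq_lt_sq₀ (norm_nonneg _)
    (norm_nonneg _), Complex.sq_norm, Complex.sq_norm, ← sub_pos,
    normSq_one_sub_conj_mul_sub_normSq_sub, ← Complex.sq_norm, ← Complex.sq_norm]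
  exact mul_pos (by nlinarith [norm_nonneg c]) (by nlinarith [norm_nonneg z])

@[simp] lemma diskMobius_self (c : ℂ) : diskMobius c c = 0 := by simp [diskMobius]

@[simp] lemma diskMobius_neg_zero (c : ℂ) : diskMobius (-c) 0 = c := by simp [diskMobius]

lemma hasDerivAt_diskMobius (h : 1 - conj c * z ≠ 0) :
    HasDerivAt (diskMobius c) (((1 - ‖c‖ ^ 2 : ℝ) : ℂ) / (1 - conj c * z) ^ 2) z := by
  have := ((hasDerivAt_id z).sub_const c).div
    (((hasDerivAt_id z).const_mul (conj c)).const_sub 1) h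
  refine HasDerivAt.congr_deriv (f := diskMobius c) this ?_
  push_cast
  rw [← conj_mul']
  simp only [id]
  ring

lemma hasDerivAt_diskMobius_self (hc : ‖c‖ < 1) :
    HasDerivAt (diskMobius c) ((1 - ‖c‖ ^ 2 : ℝ)⁻¹ : ℂ) c := by
  have hc2 : (1 - ‖c‖ ^ 2 : ℝ) ≠ 0 := by nlinarith [norm_nonneg c]
  convert hasDerivAt_diskMobius (one_sub_conj_mul_ne_zero hc hc.le) using 1
  rw [conj_mul', ← ofReal_pow, ← ofReal_one, ← ofReal_sub, ← ofReal_pow, ← ofReal_inv,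
    ← ofReal_div]
  field_simp

lemma hasDerivAt_diskMobius_neg_zero (c : ℂ) :
    HasDerivAt (diskMobius (-c)) ((1 - ‖c‖ ^ 2 : ℝ) : ℂ) (0 : ℂ) := by
  simpa using hasDerivAt_diskMobius (c := -c) (z := 0) (by simp)

lemma mapsTo_diskMobius (hc : ‖c‖ < 1) : MapsTo (diskMobius c) (ball 0 1) (ball 0 1) :=
  fun _ hz ↦ mem_ball_zero_iff.2 (norm_diskMobius_lt_one hc (mem_ball_zero_iff.1 hz))

lemma differentiableOn_diskMobius (hc : ‖c‖ < 1) : DifferentiableOn ℂ (diskMobius c) (ball 0 1) :=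
  fun _ hz ↦ (hasDerivAt_diskMobius (one_sub_conj_mul_ne_zero hc
    (mem_ball_zero_iff.1 hz).le)).differentiableAt.differentiableWithinAt

section SchwarzPick

variable {g : ℂ → ℂ} {w : ℂ}

lemma norm_diskMobius_le_norm (hd : DifferentiableOn ℂ g (ball 0 1))
    (hg : MapsTo g (ball 0 1) (ball 0 1)) (hz : z ∈ ball 0 1) :
    ‖diskMobius (g 0) (g z)‖ ≤ ‖z‖ := by
  have hg0 : ‖g 0‖ < 1 := mem_ball_zero_iff.1 (hg (mem_ball_self one_pos))
  refine norm_le_norm_of_mapsTo_ball (f := diskMobius (g 0) ∘ g)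
    ((differentiableOn_diskMobius hg0).comp hd hg)
    (fun ζ hζ ↦ ball_subset_closedBall (mapsTo_diskMobius hg0 (hg hζ))) (by simp)
    (mem_ball_zero_iff.1 hz)

lemma norm_deriv_mul_one_sub_sq_norm_le (hd : DifferentiableOn ℂ g (ball 0 1))
    (hg : MapsTo g (ball 0 1) (ball 0 1)) (hw : w ∈ ball 0 1) :
    ‖deriv g w‖ * (1 - ‖w‖ ^ 2) ≤ 1 - ‖g w‖ ^ 2 := by
  have hw1 : ‖w‖ < 1 := mem_ball_zero_iff.1 hw
  have hgw : ‖g w‖ < 1 := mem_ball_zero_iff.1 (hg hw)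
  have hmaps := mapsTo_diskMobius (c := -w) (by simpa using hw1)
  set φ := diskMobius (g w) ∘ g ∘ diskMobius (-w)
  have hφd : DifferentiableOn ℂ φ (ball 0 1) :=
    (differentiableOn_diskMobius hgw).comp
      (hd.comp (differentiableOn_diskMobius (by simpa using hw1)) hmaps) (hg.comp hmaps)
  have hφ0 : φ 0 = 0 := by simp [φ]
  have hφ' : HasDerivAt φ (((1 - ‖g w‖ ^ 2 : ℝ) : ℂ)⁻¹ * (deriv g w * (1 - ‖w‖ ^ 2 : ℝ))) 0 := by
    refine (hasDerivAt_diskMobius_self hgw).comp_of_eq (0 : ℂ) ?_ (by simp)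
    exact (hd.differentiableAt (isOpen_ball.mem_nhds hw)).hasDerivAt.comp_of_eq (0 : ℂ)
      (hasDerivAt_diskMobius_neg_zero w) (by simp)
  have hφ'1 := norm_deriv_le_one_of_mapsTo_ball hφd
    (fun ζ hζ ↦ by
      rw [hφ0]; exact ball_subset_closedBall (mapsTo_diskMobius hgw (hg (hmaps hζ)))) one_pos
  have hb : 0 < 1 - ‖g w‖ ^ 2 := by nlinarith [norm_nonneg (g w)]
  have hw2 : 0 ≤ 1 - ‖w‖ ^ 2 := by nlinarith [norm_nonneg w]
  rw [hφ'.deriv, norm_mul, norm_mul, norm_inv, norm_real, norm_real, Real.norm_of_nonneg hb.le,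
    Real.norm_of_nonneg hw2, inv_mul_le_iff₀ hb, mul_one] at hφ'1
  exact hφ'1

lemma mapsTo_ball_or_eqOn_const (hd : DifferentiableOn ℂ g (ball 0 1))
    (hg : MapsTo g (ball 0 1) (closedBall 0 1)) :
    MapsTo g (ball 0 1) (ball 0 1) ∨ ∃ c : ℂ, ‖c‖ = 1 ∧ EqOn g (fun _ ↦ c) (ball 0 1) := by
  refine or_iff_not_imp_left.2 fun hball ↦ ?_
  obtain ⟨x, hx, hgx⟩ : ∃ x ∈ ball (0 : ℂ) 1, g x ∉ ball 0 1 := by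
    simpa [MapsTo] using hball
  have hnorm : ‖g x‖ = 1 :=
    le_antisymm (mem_closedBall_zero_iff.1 (hg hx)) (by simpa using hgx)
  refine ⟨g x, hnorm, eqOn_of_isPreconnected_of_isMaxOn_norm
    (convex_ball 0 1).isPreconnected isOpen_ball hd hx fun y hy ↦ ?_⟩
  simpa [hnorm] using hg hy

lemma norm_sub_add_mul_norm_deriv_le (hd : DifferentiableOn ℂ g (ball 0 1))
    (hg : MapsTo g (ball 0 1) (closedBall 0 1)) {s : ℝ} (hws : ‖w‖ ≤ s) (hs : s < 1) :
    ‖g w - g 0‖ + ‖w‖ * ‖deriv g w‖ ≤ (1 - ‖g 0‖ ^ 2) * (s * (2 - s) / (1 - s) ^ 2) := by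
  have hw : w ∈ ball 0 1 := mem_ball_zero_iff.2 (hws.trans_lt hs)
  rcases mapsTo_ball_or_eqOn_const hd hg with hg' | ⟨c, hc, hgc⟩
  swap
  · have hderiv : deriv g w = 0 := by
      rw [(eventuallyEq_of_mem (isOpen_ball.mem_nhds hw) hgc).deriv_eq, deriv_const]
    simp [hgc hw, hgc (mem_ball_self one_pos), hc, hderiv]
  have hA : ‖g 0‖ < 1 := mem_ball_zero_iff.1 (hg' (mem_ball_self one_pos))
  have hb : ‖g w‖ < 1 := mem_ball_zero_iff.1 (hg' hw)
  have hA2 : 0 ≤ 1 - ‖g 0‖ ^ 2 := by nlinarith [norm_nonneg (g 0)]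
  have hden : 1 - conj (g 0) * g w = ((1 - ‖g 0‖ ^ 2 : ℝ) : ℂ) - conj (g 0) * (g w - g 0) := by
    push_cast
    rw [← conj_mul']
    ring
  have ht : ‖g w - g 0‖ * (1 - ‖w‖) ≤ ‖w‖ * (1 - ‖g 0‖ ^ 2) := by
    have hψ := norm_diskMobius_le_norm hd hg' hw
    rw [diskMobius, norm_div, div_le_iff₀ (norm_pos_iff.2 (one_sub_conj_mul_ne_zero hA hb.le))]
      at hψ
    have : ‖1 - conj (g 0) * g w‖ ≤ (1 - ‖g 0‖ ^ 2) + ‖g w - g 0‖ := by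
      rw [hden]
      refine (norm_sub_le _ _).trans (add_le_add (by rw [norm_real, Real.norm_of_nonneg hA2]) ?_)
      rw [norm_mul, norm_conj]
      exact mul_le_of_le_one_left (norm_nonneg _) hA.le
    nlinarith [norm_nonneg w]
  have hD : ‖deriv g w‖ * (1 - ‖w‖ ^ 2) ≤ (1 - ‖g 0‖ ^ 2) + 2 * ‖g w - g 0‖ := by
    -- `‖g w‖ ≥ ‖g 0‖ - ‖g w - g 0‖` gives `‖g w‖ ^ 2 ≥ ‖g 0‖ ^ 2 - 2 ‖g w - g 0‖`
    have hrev : ‖g 0‖ ≤ ‖g w‖ + ‖g w - g 0‖ := by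
      simpa using norm_sub_le (g w) (g w - g 0)
    nlinarith [norm_deriv_mul_one_sub_sq_norm_le hd hg' hw, norm_nonneg (g w), norm_nonneg (g 0),
      norm_nonneg (g w - g 0)]
  exact add_mul_le_mul_two_sub_div_sq hA2 (norm_nonneg w) hws hs (norm_nonneg _) (norm_nonneg _)
    ht hD

end SchwarzPick

lemma norm_le_norm_pow_of_iteratedDeriv_eq_zero {g : ℂ → ℂ} {m : ℕ}
    (hd : DifferentiableOn ℂ g (ball 0 1)) (hg : MapsTo g (ball 0 1) (closedBall 0 1))
    (h0 : ∀ k < m, iteratedDeriv k g 0 = 0) (hz : z ∈ ball 0 1) : ‖g z‖ ≤ ‖z‖ ^ m := by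
  cases m with
  | zero => simpa using hg hz
  | succ n =>
    have ha : AnalyticAt ℂ g 0 := hd.analyticAt (ball_mem_nhds 0 one_pos)
    obtain ⟨G, hG, hgG⟩ := (natCast_le_analyticOrderAt ha).1
      ((natCast_le_analyticOrderAt_iff_iteratedDeriv_eq_zero ha).2 h0)
    have hg0 : g 0 = 0 := by simpa using h0 0 n.succ_pos
    have ho : (g · - g 0) =o[𝓝 0] (fun w ↦ ‖w - 0‖ ^ n) := by
      have hlim : Tendsto (fun w ↦ w * G w) (𝓝 0) (𝓝 0) := by
        have hGc := hG.continuousAt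
        have : ContinuousAt (fun w ↦ w * G w) 0 := by fun_prop
        simpa using this.tendsto
      have := ((isBigO_refl (fun w : ℂ ↦ w ^ n) (𝓝 0)).norm_right.mul_isLittleO
        (isLittleO_one_iff ℝ |>.2 hlim))
      refine this.congr' ?_ (.of_forall fun w ↦ by simp)
      filter_upwards [hgG] with w hw
      rw [hw, hg0, sub_zero, sub_zero, smul_eq_mul, pow_succ, mul_assoc]
    have hmaps : MapsTo g (ball 0 1) (closedBall (g 0) 1) := by rwa [hg0]
    simpa [hg0] using dist_le_mul_div_pow_of_mapsTo_ball_of_isLittleO hd hmaps ho hz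

end Complex

lemma hasFPowerSeriesOnBall_ofScalars {a : ℕ → ℂ} {f : ℂ → ℂ} {R : ℝ≥0} (hR : 0 < R)
    (hf : ∀ z ∈ ball (0 : ℂ) R, HasSum (fun n ↦ a n * z ^ n) (f z)) :
    HasFPowerSeriesOnBall f (FormalMultilinearSeries.ofScalars ℂ a) 0 R where
  r_le := ENNReal.le_of_forall_nnreal_lt fun r hr ↦
    (FormalMultilinearSeries.ofScalars ℂ a).le_radius_of_tendsto (l := 0) <| by
      have hr' : ((r : ℝ) : ℂ) ∈ ball (0 : ℂ) R := by
        simpa [abs_of_nonneg r.coe_nonneg] using hr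
      simpa [FormalMultilinearSeries.ofScalars_norm] using
        (hf _ hr').summable.tendsto_atTop_zero.norm
  r_pos := by simpa using hR
  hasSum hy := by
    simpa [FormalMultilinearSeries.ofScalars_apply_eq, mul_comm] using hf _ (by simpa using hy)

lemma deriv_eq_dslope_add_sub_mul_deriv_dslope {𝕜 : Type*} [NontriviallyNormedField 𝕜]
    {f : 𝕜 → 𝕜} {c w : 𝕜} (hd : DifferentiableAt 𝕜 (dslope f c) w) :
    deriv f w = dslope f c w + (w - c) * deriv (dslope f c) w := by
  have hf : f = fun z ↦ f c + (z - c) * dslope f c z := by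
    funext z
    rw [← smul_eq_mul, sub_smul_dslope, add_sub_cancel]
  have : HasDerivAt (fun z ↦ f c + (z - c) * dslope f c z)
      (1 * dslope f c w + (w - c) * deriv (dslope f c) w) w :=
    (((hasDerivAt_id w).sub_const c).mul hd.hasDerivAt).const_add (f c)
  rw [← hf] at this
  rw [this.deriv, one_mul]

/-- an estimate from the proof of Theorem 4.
For a Schwarz function `f(z) = Σ_{n≥1} a_n z^n` and `ω` analytic on `𝔻` with `|ω| ≤ 1`
and `ω(0) = ⋯ = ω^{(m−1)}(0) = 0`, one has for `|z| = r < 1`: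
`|f′(ω(z)) − a₁| ≤ (1 − |a₁|²)·r^m(2 − r^m)/(1 − r^m)²`. -/
theorem stmt_16
    (f : ℂ → ℂ) (a : ℕ → ℂ) (ha0 : a 0 = 0)
    (hf : ∀ z ∈ Metric.ball (0:ℂ) 1, HasSum (fun n => a n * z ^ n) (f z))
    (hfb : ∀ z ∈ Metric.ball (0:ℂ) 1, ‖f z‖ ≤ 1)
    (m : ℕ) (hm : 1 ≤ m)
    (ω : ℂ → ℂ)
    (hωd : DifferentiableOn ℂ ω (Metric.ball (0:ℂ) 1))
    (hωb : ∀ z ∈ Metric.ball (0:ℂ) 1, ‖ω z‖ ≤ 1)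
    (hω0 : ∀ k < m, iteratedDeriv k ω 0 = 0) :
    ∀ (z : ℂ) (r : ℝ), z ∈ Metric.ball (0:ℂ) 1 → ‖z‖ = r →
      ‖deriv f (ω z) - a 1‖ ≤
        (1 - ‖a 1‖ ^ 2) * (r ^ m * (2 - r ^ m) / (1 - r ^ m) ^ 2) := by
  rintro z r hz rfl
  have hfs := hasFPowerSeriesOnBall_ofScalars (R := 1) one_pos (by simpa using hf)
  have hfd : DifferentiableOn ℂ f (ball 0 1) := by
    simpa only [eball_coe, NNReal.coe_one] using hfs.differentiableOn
  have hf0 : f 0 = 0 := by simpa [ha0] using (hfs.hasFPowerSeriesAt.coeff_zero ![]).symm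
  set h := dslope f 0
  have hhd : DifferentiableOn ℂ h (ball 0 1) :=
    (Complex.differentiableOn_dslope (ball_mem_nhds 0 one_pos)).2 hfd
  have hh0 : h 0 = a 1 := by simp [h, hfs.hasFPowerSeriesAt.deriv]
  have hhmaps : MapsTo h (ball 0 1) (closedBall 0 1) := fun x hx ↦ by
    simpa using Complex.norm_dslope_le_div_of_mapsTo_ball hfd
      (fun y hy ↦ by simpa [hf0] using hfb y hy) hx
  have hω : ‖ω z‖ ≤ ‖z‖ ^ m := Complex.norm_le_norm_pow_of_iteratedDeriv_eq_zero hωd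
    (fun y hy ↦ mem_closedBall_zero_iff.2 (hωb y hy)) hω0 hz
  have hs : ‖z‖ ^ m < 1 := pow_lt_one₀ (norm_nonneg z) (mem_ball_zero_iff.1 hz) (by omega)
  have hωz : ω z ∈ ball 0 1 := mem_ball_zero_iff.2 (hω.trans_lt hs)
  have hderiv : deriv f (ω z) = h (ω z) + ω z * deriv h (ω z) := by
    simpa using deriv_eq_dslope_add_sub_mul_deriv_dslope
      (hhd.differentiableAt (isOpen_ball.mem_nhds hωz))
  calc ‖deriv f (ω z) - a 1‖ = ‖(h (ω z) - h 0) + ω z * deriv h (ω z)‖ := by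
        rw [hderiv, hh0]; congr 1; ring
    _ ≤ ‖h (ω z) - h 0‖ + ‖ω z‖ * ‖deriv h (ω z)‖ :=
        (norm_add_le _ _).trans_eq (by rw [norm_mul])
    _ ≤ _ := hh0 ▸ Complex.norm_sub_add_mul_norm_deriv_le hhd hhmaps hω hs
end

section
/- Let p ∈ (1,2], a ∈ [0,1], and m ∈ ℕ, and define Φ(r) = (1 + r^m)²·(r^m + a)^{p−1}/(1 + a·r^m)^{p+1} for r ∈ [0,1). Then Φ(r^{1/m}) ≥ a^{p−1} for all r ∈ [0,1); equivalently, (1 + r)²·(r + a)^{p−1} ≥ a^{p−1}·(1 + ar)^{p+1} for all r ∈ [0,1). -/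
/-! Split `(1 + a r)^(p+1) = (1 + a r)^(p-1) (1 + a r)^2`. Then the inequality is the product of
`(a (1 + a r))^(p-1) ≤ (r + a)^(p-1)`, true because `r + a - a (1 + a r) = r (1 - a²) ≥ 0` and
`p ≥ 1`, and `(1 + a r)^2 ≤ (1 + r)^2`. The first claim reduces to the second since
`(r^(1/m))^m = r`. -/

open Real

lemma mul_one_add_mul_le_add {a r : ℝ} (ha0 : 0 ≤ a) (ha1 : a ≤ 1) (hr : 0 ≤ r) :
    a * (1 + a * r) ≤ r + a := by
  nlinarith [mul_nonneg (mul_nonneg ha0 hr) (sub_nonneg.2 ha1)]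

lemma rpow_sub_one_mul_one_add_mul_rpow_add_one_le {p a r : ℝ} (hp : 1 ≤ p)
    (ha0 : 0 ≤ a) (ha1 : a ≤ 1) (hr : 0 ≤ r) :
    a ^ (p - 1) * (1 + a * r) ^ (p + 1) ≤ (1 + r) ^ 2 * (r + a) ^ (p - 1) := by
  have hpos : 0 < 1 + a * r := by positivity
  have hsplit : (1 + a * r) ^ (p + 1) = (1 + a * r) ^ (p - 1) * (1 + a * r) ^ 2 := by
    rw [show p + 1 = p - 1 + (2 : ℕ) by push_cast; ring, rpow_add_natCast hpos.ne']
  calc a ^ (p - 1) * (1 + a * r) ^ (p + 1)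
      = (a * (1 + a * r)) ^ (p - 1) * (1 + a * r) ^ 2 := by
        rw [hsplit, ← mul_assoc, mul_rpow ha0 hpos.le]
    _ ≤ (r + a) ^ (p - 1) * (1 + r) ^ 2 := by
        gcongr
        · exact mul_one_add_mul_le_add ha0 ha1 hr
        · nlinarith
    _ = (1 + r) ^ 2 * (r + a) ^ (p - 1) := mul_comm _ _

theorem stmt_19_general (p : ℝ) (hp1 : 1 < p)
    (a : ℝ) (ha : a ∈ Set.Icc (0:ℝ) 1) (m : ℕ) (hm : 1 ≤ m) :
    (∀ r ∈ Set.Ico (0:ℝ) 1,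
      a ^ (p - 1) ≤
        (1 + (r ^ ((1:ℝ) / m)) ^ m) ^ 2 * ((r ^ ((1:ℝ) / m)) ^ m + a) ^ (p - 1)
          / (1 + a * (r ^ ((1:ℝ) / m)) ^ m) ^ (p + 1)) ∧
    (∀ r ∈ Set.Ico (0:ℝ) 1,
      a ^ (p - 1) * (1 + a * r) ^ (p + 1) ≤ (1 + r) ^ 2 * (r + a) ^ (p - 1)) := by
  have key : ∀ r ∈ Set.Ico (0:ℝ) 1,
      a ^ (p - 1) * (1 + a * r) ^ (p + 1) ≤ (1 + r) ^ 2 * (r + a) ^ (p - 1) :=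
    fun r hr => rpow_sub_one_mul_one_add_mul_rpow_add_one_le hp1.le ha.1 ha.2 hr.1
  refine ⟨fun r hr => ?_, key⟩
  rw [one_div, rpow_inv_natCast_pow hr.1 (by omega),
    le_div_iff₀ (rpow_pos_of_pos (by nlinarith [ha.1, hr.1]) _)]
  exact key r hr

/-- inequality from the proof of Lemma 3, after `[LP2021, Lemma 3.1]`.
For `p ∈ (1,2]`, `a ∈ [0,1]`, `m ≥ 1` and
`Φ(r) = (1 + r^m)²(r^m + a)^{p−1}/(1 + a r^m)^{p+1}`, one has `Φ(r^{1/m}) ≥ a^{p−1}`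
for all `r ∈ [0,1)`; equivalently
`(1 + r)²(r + a)^{p−1} ≥ a^{p−1}(1 + ar)^{p+1}` for all `r ∈ [0,1)`. -/
theorem stmt_19 (p : ℝ) (hp1 : 1 < p) (hp2 : p ≤ 2)
    (a : ℝ) (ha : a ∈ Set.Icc (0:ℝ) 1) (m : ℕ) (hm : 1 ≤ m) :
    (∀ r ∈ Set.Ico (0:ℝ) 1,
      a ^ (p - 1) ≤
        (1 + (r ^ ((1:ℝ) / m)) ^ m) ^ 2 * ((r ^ ((1:ℝ) / m)) ^ m + a) ^ (p - 1)
          / (1 + a * (r ^ ((1:ℝ) / m)) ^ m) ^ (p + 1)) ∧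
    (∀ r ∈ Set.Ico (0:ℝ) 1,
      a ^ (p - 1) * (1 + a * r) ^ (p + 1) ≤ (1 + r) ^ 2 * (r + a) ^ (p - 1)) :=
  stmt_19_general p hp1 a ha m hm
end
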